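/- arXiv:1911.06728 — 7 statements merged into one kernel-verified Lean document; each statement's English description precedes it below -/
import Mathlib

section
/- Let V:[0,∞)→[0,∞) be lower semi-continuous and nonnegative, and let X be a random vector in ℝ^d. Define Δ(f) = E[V(d(X, Im f))] for a curve f. If a sequence of curves (f_n)_{n≥1} converges uniformly on [0,1] to a curve f, then liminf_{n→∞} Δ(f_n) ≥ Δ(f); that is, the functional Δ is lower semi-continuous for the topology of uniform convergence on C([0,1]). -/
open MeasureTheory Filter
open scoped ENNReal NNReal InnerProductSpace Topology

/-!
Uniform convergence `f n → φ` moves every point of the image of `f n` by at most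
`sup |f n - φ|`, so `d(x, Im f n) → d(x, Im φ)` for every `x`. Lower semicontinuity of `V`
then gives `V(d(x, Im φ)) ≤ liminf V(d(x, Im f n))` pointwise, and Fatou's lemma integrates
this inequality.
-/

namespace Metric

variable {α E : Type*} [PseudoMetricSpace E]

theorem infDist_image_le_infDist_image_add {S : Set α} {g h : α → E} {ε : ℝ} (hε : 0 ≤ ε)
    (hgh : ∀ t ∈ S, dist (g t) (h t) ≤ ε) (x : E) :
    infDist x (g '' S) ≤ infDist x (h '' S) + ε := by
  rcases S.eq_empty_or_nonempty with rfl | hS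
  · simpa using hε
  rw [← sub_le_iff_le_add, le_infDist (hS.image h)]
  rintro _ ⟨t, ht, rfl⟩
  calc infDist x (g '' S) - ε ≤ dist x (g t) - ε :=
        sub_le_sub_right (infDist_le_dist_of_mem (Set.mem_image_of_mem g ht)) ε
    _ ≤ dist x (h t) := by linarith [dist_triangle x (h t) (g t), dist_comm (g t) (h t), hgh t ht]

end Metric

open Metric

section

variable {α E : Type*} [PseudoMetricSpace E]

theorem TendstoUniformlyOn.tendsto_infDist_image {ι : Type*} {l : Filter ι}
    {F : ι → α → E} {φ : α → E} {S : Set α} (hF : TendstoUniformlyOn F φ l S) (x : E) :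
    Tendsto (fun n => infDist x (F n '' S)) l (𝓝 (infDist x (φ '' S))) := by
  rw [Metric.tendsto_nhds]
  intro ε hε
  filter_upwards [Metric.tendstoUniformlyOn_iff.mp hF (ε / 2) (half_pos hε)] with n hn
  have hφF : ∀ t ∈ S, dist (φ t) (F n t) ≤ ε / 2 := fun t ht => (hn t ht).le
  have hFφ : ∀ t ∈ S, dist (F n t) (φ t) ≤ ε / 2 := fun t ht => dist_comm (φ t) (F n t) ▸ hφF t ht
  rw [Real.dist_eq, abs_lt]
  constructor
  · linarith [infDist_image_le_infDist_image_add (half_pos hε).le hφF x]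
  · linarith [infDist_image_le_infDist_image_add (half_pos hε).le hFφ x]

theorem LowerSemicontinuousOn.lowerSemicontinuous_comp_infDist {γ : Type*}
    [Preorder γ] {G : ℝ → γ} (hG : LowerSemicontinuousOn G (Set.Ici 0)) (A : Set E) :
    LowerSemicontinuous fun x => G (infDist x A) := by
  rw [← lowerSemicontinuousOn_univ_iff]
  exact hG.comp (continuous_infDist_pt A).continuousOn fun _ _ => infDist_nonneg

end

theorem LowerSemicontinuousWithinAt.le_liminf_comp {α β ι : Type*} [TopologicalSpace α]
    [CompleteLinearOrder β] {f : α → β} {s : Set α} {a : α} {u : ι → α} {l : Filter ι}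
    (hf : LowerSemicontinuousWithinAt f s a) (hu : Tendsto u l (𝓝[s] a)) :
    f a ≤ liminf (f ∘ u) l :=
  hf.le_liminf.trans hu.liminf_le_liminf_comp

theorem statement_1_general {d : ℕ} (V : ℝ → ℝ)
    (hV_lsc : LowerSemicontinuousOn V (Set.Ici 0))
    {Ω : Type*} [MeasurableSpace Ω] (P : Measure Ω)
    (X : Ω → EuclideanSpace ℝ (Fin d)) (hX : Measurable X)
    (f : ℕ → ℝ → EuclideanSpace ℝ (Fin d)) (φ : ℝ → EuclideanSpace ℝ (Fin d))
    (hconv : TendstoUniformlyOn f φ atTop (Set.Icc 0 1)) :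
    ∫⁻ ω, ENNReal.ofReal (V (Metric.infDist (X ω) (φ '' Set.Icc 0 1))) ∂P ≤
      Filter.liminf
        (fun n => ∫⁻ ω, ENNReal.ofReal (V (Metric.infDist (X ω) (f n '' Set.Icc 0 1))) ∂P)
        atTop := by
  set G : ℝ → ℝ≥0∞ := fun r => ENNReal.ofReal (V r)
  have hG : LowerSemicontinuousOn G (Set.Ici 0) :=
    ENNReal.continuous_ofReal.comp_lowerSemicontinuousOn hV_lsc ENNReal.ofReal_mono
  have hmeas : ∀ n, Measurable fun ω => G (Metric.infDist (X ω) (f n '' Set.Icc 0 1)) :=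
    fun n => (hG.lowerSemicontinuous_comp_infDist _).measurable.comp hX
  have hpointwise : ∀ ω, G (Metric.infDist (X ω) (φ '' Set.Icc 0 1)) ≤
      liminf (fun n => G (Metric.infDist (X ω) (f n '' Set.Icc 0 1))) atTop := fun ω =>
    LowerSemicontinuousWithinAt.le_liminf_comp (hG _ Metric.infDist_nonneg) <|
      tendsto_nhdsWithin_of_tendsto_nhds_of_eventually_within _
        (hconv.tendsto_infDist_image (X ω)) (Eventually.of_forall fun _ => Metric.infDist_nonneg)
  calc ∫⁻ ω, G (Metric.infDist (X ω) (φ '' Set.Icc 0 1)) ∂P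
      ≤ ∫⁻ ω, liminf (fun n => G (Metric.infDist (X ω) (f n '' Set.Icc 0 1))) atTop ∂P :=
        lintegral_mono hpointwise
    _ ≤ _ := lintegral_liminf_le hmeas

/-- The distortion functional `Δ(f) = E[V(d(X, Im f))]` is lower
semi-continuous for the topology of uniform convergence on curves: if curves `f n`
converge uniformly on `[0,1]` to a curve `φ`, then `liminf Δ(f n) ≥ Δ(φ)`. -/
theorem statement_1 {d : ℕ} (V : ℝ → ℝ)
    (hV_nonneg : ∀ x ∈ Set.Ici (0:ℝ), 0 ≤ V x)
    (hV_lsc : LowerSemicontinuousOn V (Set.Ici 0))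
    {Ω : Type*} [MeasurableSpace Ω] (P : Measure Ω) [IsProbabilityMeasure P]
    (X : Ω → EuclideanSpace ℝ (Fin d)) (hX : Measurable X)
    (f : ℕ → ℝ → EuclideanSpace ℝ (Fin d)) (φ : ℝ → EuclideanSpace ℝ (Fin d))
    (hf : ∀ n, ContinuousOn (f n) (Set.Icc 0 1)) (hφ : ContinuousOn φ (Set.Icc 0 1))
    (hconv : TendstoUniformlyOn f φ atTop (Set.Icc 0 1)) :
    ∫⁻ ω, ENNReal.ofReal (V (Metric.infDist (X ω) (φ '' Set.Icc 0 1))) ∂P ≤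
      Filter.liminf
        (fun n => ∫⁻ ω, ENNReal.ofReal (V (Metric.infDist (X ω) (f n '' Set.Icc 0 1))) ∂P)
        atTop :=
  statement_1_general V hV_lsc P X hX f φ hconv
end

section
/- Let f:[0,1]→ℝ^d be a rectifiable curve. For θ ∈ S^{d−1}, let f_θ:[0,1]→ℝ be defined by f_θ(t) = ⟨θ, f(t)⟩ and let V(f_θ) denote the total variation of f_θ on [0,1]. Then 𝓛(f) = (1/c_d) ∫_{S^{d−1}} V(f_θ) dθ. -/
/-!
The variation of a continuous curve is the increasing limit of its variations along the dyadic
partitions of `[0,1]`, and the same holds for every projection `f_θ`. By monotone convergence it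
therefore suffices to integrate a single increment, i.e. to show
`∫_{S^{d-1}} |⟪θ, v⟫| dθ = c_d ‖v‖`; this follows from the invariance of the Hausdorff measure
under the reflection exchanging `v / ‖v‖` and `e`. Finally `0 < c_d < ∞`: the sphere projects
onto a `(d-1)`-dimensional unit ball, and it is covered by the central projections onto it of
`(d-1)`-balls in the tangent hyperplanes at `±bᵢ` for an orthonormal basis `b`, which are
Lipschitz.
-/

open MeasureTheory Filter Set Module
open scoped ENNReal NNReal InnerProductSpace Topology

theorem eVariationOn_le_iSup_of_tendsto_comp {α E : Type*} [LinearOrder α]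
    [PseudoEMetricSpace E] {g : α → E} {s : Set α} {t : ℕ → Set α} {φ : ℕ → α → α}
    (hφ : ∀ N, MonotoneOn (φ N) s) (hmaps : ∀ N, MapsTo (φ N) s (t N))
    (hlim : ∀ x ∈ s, Tendsto (fun N => g (φ N x)) atTop (𝓝 (g x))) :
    eVariationOn g s ≤ ⨆ N, eVariationOn g (t N) := by
  refine le_of_forall_lt fun v hv => ?_
  obtain ⟨N, hN⟩ := (eVariationOn.lowerSemicontinuous_aux hlim hv).exists
  exact hN.trans_le <| (eVariationOn.comp_le_of_monotoneOn g (φ N) (hφ N) (hmaps N)).trans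
    (le_iSup (fun N => eVariationOn g (t N)) N)

theorem monotone_div_two_pow (N : ℕ) : Monotone fun j : ℕ => (j : ℝ) / 2 ^ N :=
  fun _ _ hij => div_le_div_of_nonneg_right (Nat.cast_le.2 hij) (by positivity)

def dyadicGrid (N : ℕ) : Set ℝ := (fun j : ℕ => (j : ℝ) / 2 ^ N) '' Iic (2 ^ N)

theorem dyadicGrid_subset_Icc (N : ℕ) : dyadicGrid N ⊆ Icc 0 1 := by
  rintro _ ⟨j, hj, rfl⟩
  refine ⟨by positivity, div_le_one_of_le₀ ?_ (by positivity)⟩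
  exact_mod_cast hj

theorem dyadicGrid_mono : Monotone dyadicGrid := by
  refine monotone_nat_of_le_succ fun N => ?_
  rintro _ ⟨j, hj, rfl⟩
  refine ⟨2 * j, by simp only [mem_Iic, pow_succ] at hj ⊢; omega, ?_⟩
  push_cast
  rw [pow_succ]
  field_simp

theorem ContinuousOn.eVariationOn_Icc_eq_iSup_dyadicGrid {E : Type*} [PseudoEMetricSpace E]
    {g : ℝ → E} (hg : ContinuousOn g (Icc 0 1)) :
    eVariationOn g (Icc 0 1) = ⨆ N, eVariationOn g (dyadicGrid N) := by
  refine le_antisymm ?_ (iSup_le fun N => eVariationOn.mono g (dyadicGrid_subset_Icc N))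
  set φ : ℕ → ℝ → ℝ := fun N x => (⌊x * 2 ^ N⌋₊ : ℝ) / 2 ^ N
  have hφ_mem : ∀ N, MapsTo (φ N) (Icc 0 1) (dyadicGrid N) := by
    intro N x hx
    refine ⟨⌊x * 2 ^ N⌋₊, Nat.floor_le_of_le ?_, rfl⟩
    push_cast
    exact mul_le_of_le_one_left (by positivity) hx.2
  refine eVariationOn_le_iSup_of_tendsto_comp (fun N x _ y _ hxy => ?_) hφ_mem fun x hx => ?_
  · simp only [φ]
    gcongr
  · refine (hg x hx).tendsto.comp (tendsto_nhdsWithin_iff.2 ⟨?_, ?_⟩)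
    · exact (tendsto_nat_floor_mul_div_atTop hx.1).comp
        (tendsto_pow_atTop_atTop_of_one_lt one_lt_two)
    · exact Eventually.of_forall fun N => dyadicGrid_subset_Icc N (hφ_mem N hx)

theorem OrthonormalBasis.norm_le_sum_abs_inner {V ι : Type*} [NormedAddCommGroup V]
    [InnerProductSpace ℝ V] [Fintype ι] (b : OrthonormalBasis ι ℝ V) (x : V) :
    ‖x‖ ≤ ∑ i, |⟪x, b i⟫_ℝ| := by
  conv_lhs => rw [← b.sum_repr' x]
  refine (norm_sum_le _ _).trans_eq (Finset.sum_congr rfl fun i _ => ?_)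
  rw [norm_smul, b.orthonormal.1 i, mul_one, Real.norm_eq_abs, real_inner_comm]

theorem OrthonormalBasis.norm_eq_one_of_mem_range_union_neg {V ι : Type*}
    [NormedAddCommGroup V] [InnerProductSpace ℝ V] [Fintype ι] (b : OrthonormalBasis ι ℝ V)
    {e : V} (he : e ∈ range b ∪ range (fun i => -b i)) : ‖e‖ = 1 := by
  rcases he with ⟨j, rfl⟩ | ⟨j, rfl⟩ <;> simp [b.orthonormal.1 j]

section Crofton

variable {V : Type*} [NormedAddCommGroup V] [InnerProductSpace ℝ V] [MeasurableSpace V]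
  [BorelSpace V] (s : ℝ)

noncomputable def sphereIntegralAbsInner (v : V) : ℝ≥0∞ :=
  ∫⁻ θ in Metric.sphere (0 : V) 1, ENNReal.ofReal |⟪θ, v⟫_ℝ| ∂μH[s]

theorem sphereIntegralAbsInner_smul (c : ℝ) (v : V) :
    sphereIntegralAbsInner s (c • v) = ENNReal.ofReal |c| * sphereIntegralAbsInner s v := by
  simp only [sphereIntegralAbsInner, real_inner_smul_right, abs_mul,
    ENNReal.ofReal_mul (abs_nonneg c)]
  exact lintegral_const_mul' _ _ ENNReal.ofReal_ne_top

theorem sphereIntegralAbsInner_eq_of_norm_eq {u v : V} (h : ‖u‖ = ‖v‖) :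
    sphereIntegralAbsInner s u = sphereIntegralAbsInner s v := by
  set R := Submodule.reflection (ℝ ∙ (u - v))ᗮ
  have hpre : R ⁻¹' Metric.sphere 0 1 = Metric.sphere 0 1 := by
    ext x
    simp
  have key :=
    (R.toIsometryEquiv.measurePreserving_hausdorffMeasure s).setLIntegral_comp_preimage_emb
      R.toHomeomorph.measurableEmbedding (fun θ => ENNReal.ofReal |⟪θ, v⟫_ℝ|) (Metric.sphere 0 1)
  simp only [LinearIsometryEquiv.coe_toIsometryEquiv, hpre] at key
  rw [sphereIntegralAbsInner, sphereIntegralAbsInner, ← key]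
  refine lintegral_congr fun θ => ?_
  rw [← Submodule.reflection_sub h]
  simp [R]

theorem sphereIntegralAbsInner_eq_norm_mul {e : V} (he : ‖e‖ = 1) (v : V) :
    sphereIntegralAbsInner s v = ENNReal.ofReal ‖v‖ * sphereIntegralAbsInner s e := by
  rcases eq_or_ne v 0 with rfl | hv
  · simpa using sphereIntegralAbsInner_smul s 0 e
  have hu : ‖‖v‖⁻¹ • v‖ = ‖e‖ := by
    rw [norm_smul, norm_inv, norm_norm, inv_mul_cancel₀ (norm_ne_zero_iff.2 hv), he]
  calc sphereIntegralAbsInner s v = sphereIntegralAbsInner s (‖v‖ • ‖v‖⁻¹ • v) := by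
        rw [smul_inv_smul₀ (norm_ne_zero_iff.2 hv)]
    _ = ENNReal.ofReal ‖v‖ * sphereIntegralAbsInner s e := by
        rw [sphereIntegralAbsInner_smul, abs_norm, sphereIntegralAbsInner_eq_of_norm_eq s hu]

theorem sphereIntegralAbsInner_le (v : V) :
    sphereIntegralAbsInner s v ≤ ENNReal.ofReal ‖v‖ * μH[s] (Metric.sphere (0 : V) 1) := by
  rw [← setLIntegral_const]
  refine setLIntegral_mono' Metric.isClosed_sphere.measurableSet fun θ hθ => ?_
  refine ENNReal.ofReal_le_ofReal ((abs_real_inner_le_norm θ v).trans ?_)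
  rw [mem_sphere_zero_iff_norm.1 hθ, one_mul]

theorem hausdorffMeasure_sphere_le_card_mul {ι : Type*} [Fintype ι]
    (b : OrthonormalBasis ι ℝ V) {e : V} (he : ‖e‖ = 1) :
    μH[s] (Metric.sphere (0 : V) 1) ≤ Fintype.card ι * sphereIntegralAbsInner s e := by
  have hb : ∀ i, sphereIntegralAbsInner s (b i) = sphereIntegralAbsInner s e := fun i =>
    sphereIntegralAbsInner_eq_of_norm_eq s (by rw [b.orthonormal.1 i, he])
  calc μH[s] (Metric.sphere (0 : V) 1)
      ≤ ∫⁻ θ in Metric.sphere (0 : V) 1, ∑ i, ENNReal.ofReal |⟪θ, b i⟫_ℝ| ∂μH[s] := by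
        rw [← setLIntegral_one]
        refine setLIntegral_mono' Metric.isClosed_sphere.measurableSet fun θ hθ => ?_
        rw [← ENNReal.ofReal_sum_of_nonneg fun i _ => abs_nonneg _, ← ENNReal.ofReal_one,
          ← mem_sphere_zero_iff_norm.1 hθ]
        exact ENNReal.ofReal_le_ofReal (b.norm_le_sum_abs_inner θ)
    _ = Fintype.card ι * sphereIntegralAbsInner s e := by
        rw [lintegral_finsetSum' _ fun i _ => by fun_prop]
        exact (Finset.sum_congr rfl fun i _ => hb i).trans (by simp)

theorem lintegral_eVariationOn_inner_image_Iic {α : Type*} [LinearOrder α] {e : V}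
    (he : ‖e‖ = 1) (f : α → V) {u : ℕ → α} (hu : Monotone u) (n : ℕ) :
    ∫⁻ θ in Metric.sphere (0 : V) 1, eVariationOn (fun t => ⟪θ, f t⟫_ℝ) (u '' Iic n) ∂μH[s] =
      sphereIntegralAbsInner s e * eVariationOn f (u '' Iic n) := by
  simp only [eVariationOn.image_range_of_monotone _ hu, Finset.mul_sum]
  rw [lintegral_finsetSum' _ fun i _ => by fun_prop]
  refine Finset.sum_congr rfl fun i _ => ?_
  simp only [edist_dist, Real.dist_eq, ← inner_sub_right]
  rw [← sphereIntegralAbsInner, sphereIntegralAbsInner_eq_norm_mul s he, mul_comm, dist_eq_norm]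

theorem lintegral_eVariationOn_inner {e : V} (he : ‖e‖ = 1) {f : ℝ → V}
    (hf : ContinuousOn f (Icc 0 1)) :
    ∫⁻ θ in Metric.sphere (0 : V) 1, eVariationOn (fun t => ⟪θ, f t⟫_ℝ) (Icc 0 1) ∂μH[s] =
      sphereIntegralAbsInner s e * eVariationOn f (Icc 0 1) := by
  have hmeas (N : ℕ) :
      Measurable fun θ : V => eVariationOn (fun t => ⟪θ, f t⟫_ℝ) (dyadicGrid N) := by
    simp only [dyadicGrid, eVariationOn.image_range_of_monotone _ (monotone_div_two_pow N)]
    fun_prop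
  calc ∫⁻ θ in Metric.sphere (0 : V) 1, eVariationOn (fun t => ⟪θ, f t⟫_ℝ) (Icc 0 1) ∂μH[s]
      = ∫⁻ θ in Metric.sphere (0 : V) 1,
          ⨆ N, eVariationOn (fun t => ⟪θ, f t⟫_ℝ) (dyadicGrid N) ∂μH[s] := by
        congr! with θ
        exact (continuousOn_const.inner hf).eVariationOn_Icc_eq_iSup_dyadicGrid
    _ = ⨆ N, ∫⁻ θ in Metric.sphere (0 : V) 1,
          eVariationOn (fun t => ⟪θ, f t⟫_ℝ) (dyadicGrid N) ∂μH[s] :=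
        lintegral_iSup hmeas fun N M hNM θ => eVariationOn.mono _ (dyadicGrid_mono hNM)
    _ = ⨆ N, sphereIntegralAbsInner s e * eVariationOn f (dyadicGrid N) := by
        congr! with N
        exact lintegral_eVariationOn_inner_image_Iic s he f (monotone_div_two_pow N) _
    _ = sphereIntegralAbsInner s e * eVariationOn f (Icc 0 1) := by
        rw [← ENNReal.mul_iSup, hf.eVariationOn_Icc_eq_iSup_dyadicGrid]

end Crofton

theorem lipschitzOnWith_inv_norm_smul {F : Type*} [NormedAddCommGroup F] [NormedSpace ℝ F] :
    LipschitzOnWith 2 (fun x : F => ‖x‖⁻¹ • x) {x | 1 ≤ ‖x‖} := by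
  refine LipschitzOnWith.of_dist_le_mul fun x (hx : 1 ≤ ‖x‖) y (hy : 1 ≤ ‖y‖) => ?_
  have hx0 : 0 < ‖x‖ := one_pos.trans_le hx
  have hy0 : 0 < ‖y‖ := one_pos.trans_le hy
  have hxinv : ‖x‖⁻¹ ≤ 1 := inv_le_one_of_one_le₀ hx
  have hsplit : ‖x‖⁻¹ • x - ‖y‖⁻¹ • y = ‖x‖⁻¹ • (x - y) + (‖x‖⁻¹ - ‖y‖⁻¹) • y := by
    rw [smul_sub, sub_smul]; abel
  have hcoef : |‖x‖⁻¹ - ‖y‖⁻¹| * ‖y‖ = ‖x‖⁻¹ * |‖x‖ - ‖y‖| := by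
    rw [inv_sub_inv hx0.ne' hy0.ne', abs_div, abs_of_pos (mul_pos hx0 hy0), abs_sub_comm]
    field_simp
  rw [dist_eq_norm, dist_eq_norm, hsplit, NNReal.coe_ofNat, two_mul]
  refine (norm_add_le _ _).trans (add_le_add ?_ ?_)
  · rw [norm_smul, norm_inv, norm_norm]
    exact mul_le_of_le_one_left (norm_nonneg _) hxinv
  · rw [norm_smul, Real.norm_eq_abs, hcoef]
    exact (mul_le_of_le_one_left (abs_nonneg _) hxinv).trans (abs_norm_sub_norm_le x y)

theorem closedBall_orthogonal_subset_image_sphere {V : Type*} [NormedAddCommGroup V]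
    [InnerProductSpace ℝ V] {e : V} (he : ‖e‖ = 1) :
    Metric.closedBall (0 : (ℝ ∙ e)ᗮ) 1 ⊆
      (ℝ ∙ e)ᗮ.orthogonalProjectionOnto '' Metric.sphere 0 1 := by
  intro y hy
  rw [mem_closedBall_zero_iff] at hy
  have hye : ⟪(y : V), e⟫_ℝ = 0 := by
    rw [real_inner_comm]; exact Submodule.mem_orthogonal_singleton_iff_inner_right.1 y.2
  refine ⟨y + √(1 - ‖y‖ ^ 2) • e, ?_, ?_⟩
  · have hsq : ‖(y : V) + √(1 - ‖y‖ ^ 2) • e‖ ^ 2 = 1 := by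
      rw [norm_add_sq_real, real_inner_smul_right, hye, norm_smul, he, Real.norm_eq_abs,
        mul_one, sq_abs, Real.sq_sqrt (by nlinarith [norm_nonneg y])]
      simp
    rw [mem_sphere_zero_iff_norm]
    nlinarith [norm_nonneg ((y : V) + √(1 - ‖y‖ ^ 2) • e)]
  · rw [map_add, map_smul, Submodule.orthogonalProjectionOnto_mem_subspace_eq_self,
      Submodule.orthogonalProjectionOnto_orthogonalComplement_singleton_eq_zero, smul_zero,
      add_zero]

section SphereMeasure

variable {V : Type*} [NormedAddCommGroup V] [InnerProductSpace ℝ V]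

noncomputable def centralProjection (e : V) (y : (ℝ ∙ e)ᗮ) : V := ‖e + y‖⁻¹ • (e + y)

theorem lipschitzWith_centralProjection {e : V} (he : ‖e‖ = 1) :
    LipschitzWith 2 (centralProjection e) := by
  have hmaps : MapsTo (fun y : (ℝ ∙ e)ᗮ => e + (y : V)) univ {x | 1 ≤ ‖x‖} := by
    intro y _
    have hey : ⟪e, (y : V)⟫_ℝ = 0 := Submodule.mem_orthogonal_singleton_iff_inner_right.1 y.2
    have : 1 ≤ ‖e + (y : V)‖ ^ 2 := by
      rw [norm_add_sq_real, hey, he]; nlinarith [norm_nonneg (y : V)]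
    simp only [mem_ofPred_eq]
    nlinarith [norm_nonneg (e + (y : V))]
  have hy : LipschitzOnWith 1 (fun y : (ℝ ∙ e)ᗮ => e + (y : V)) univ :=
    ((isometry_vadd V e).comp isometry_subtype_coe).lipschitz.lipschitzOnWith
  have h := lipschitzOnWith_inv_norm_smul.comp hy hmaps
  rwa [mul_one, lipschitzOnWith_univ] at h

theorem exists_centralProjection_eq {e θ : V} (he : ‖e‖ = 1) (hθ : ‖θ‖ = 1)
    (hpos : 0 < ⟪θ, e⟫_ℝ) :
    ∃ y : (ℝ ∙ e)ᗮ, ‖y‖ ≤ (⟪θ, e⟫_ℝ)⁻¹ + 1 ∧ centralProjection e y = θ := by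
  set c := ⟪θ, e⟫_ℝ
  have hy : c⁻¹ • θ - e ∈ (ℝ ∙ e)ᗮ := by
    rw [Submodule.mem_orthogonal_singleton_iff_inner_right, inner_sub_right,
      real_inner_smul_right, real_inner_comm, inv_mul_cancel₀ hpos.ne', real_inner_self_eq_norm_sq,
      he]
    norm_num
  refine ⟨⟨_, hy⟩, ?_, ?_⟩
  · calc ‖c⁻¹ • θ - e‖ ≤ ‖c⁻¹ • θ‖ + ‖e‖ := norm_sub_le _ _
      _ = c⁻¹ + 1 := by rw [norm_smul, hθ, he, norm_inv, Real.norm_of_nonneg hpos.le, mul_one]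
  · simp only [centralProjection, add_sub_cancel, norm_smul, hθ, norm_inv,
      Real.norm_of_nonneg hpos.le, mul_one, inv_inv, smul_smul, mul_inv_cancel₀ hpos.ne', one_smul]

theorem sphere_subset_biUnion_centralProjection {ι : Type*} [Fintype ι]
    (b : OrthonormalBasis ι ℝ V) :
    Metric.sphere (0 : V) 1 ⊆ ⋃ e ∈ range b ∪ range (fun i => -b i),
      centralProjection e '' Metric.closedBall 0 (Fintype.card ι + 2) := by
  intro θ hθ
  rw [mem_sphere_zero_iff_norm] at hθ
  have hsum : ∑ _i : ι, ((Fintype.card ι : ℝ) + 1)⁻¹ < ∑ i, |⟪θ, b i⟫_ℝ| := by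
    refine lt_of_lt_of_le ?_ (hθ ▸ b.norm_le_sum_abs_inner θ)
    rw [Finset.sum_const, Finset.card_univ, nsmul_eq_mul, mul_inv_lt_iff₀ (by positivity)]
    linarith
  obtain ⟨i, -, hi⟩ := Finset.exists_lt_of_sum_lt hsum
  obtain ⟨e, he_mem, hθe⟩ : ∃ e ∈ range b ∪ range (fun i => -b i), ⟪θ, e⟫_ℝ = |⟪θ, b i⟫_ℝ| := by
    rcases le_or_gt 0 ⟪θ, b i⟫_ℝ with h | h
    · exact ⟨b i, Or.inl ⟨i, rfl⟩, (abs_of_nonneg h).symm⟩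
    · exact ⟨-b i, Or.inr ⟨i, rfl⟩, by rw [inner_neg_right, abs_of_neg h]⟩
  have he := b.norm_eq_one_of_mem_range_union_neg he_mem
  have hpos : 0 < ⟪θ, e⟫_ℝ := hθe ▸ lt_trans (by positivity) hi
  obtain ⟨y, hy, hyθ⟩ := exists_centralProjection_eq he hθ hpos
  refine mem_biUnion he_mem ⟨y, mem_closedBall_zero_iff.2 (hy.trans ?_), hyθ⟩
  rw [hθe] at hpos ⊢
  linarith [(inv_lt_comm₀ (by positivity) hpos).1 hi]

variable [FiniteDimensional ℝ V] [MeasurableSpace V] [BorelSpace V] {m : ℕ}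

theorem isAddHaarMeasure_hausdorffMeasure_orthogonal (hV : finrank ℝ V = m + 1) {e : V}
    (he : e ≠ 0) : (μH[m] : Measure (ℝ ∙ e)ᗮ).IsAddHaarMeasure := by
  have : Fact (finrank ℝ V = m + 1) := ⟨hV⟩
  have h := isAddHaarMeasure_hausdorffMeasure (E := (ℝ ∙ e)ᗮ)
  rwa [Submodule.finrank_orthogonal_span_singleton (n := m) he] at h

theorem hausdorffMeasure_sphere_lt_top (hV : finrank ℝ V = m + 1) :
    μH[m] (Metric.sphere (0 : V) 1) < ⊤ := by
  let b := stdOrthonormalBasis ℝ V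
  have hfin : (range b ∪ range (fun i => -b i)).Finite :=
    (finite_range b).union (finite_range _)
  refine (measure_mono (sphere_subset_biUnion_centralProjection b)).trans_lt
    (measure_biUnion_lt_top hfin fun e he_mem => ?_)
  have he := b.norm_eq_one_of_mem_range_union_neg he_mem
  have := isAddHaarMeasure_hausdorffMeasure_orthogonal hV (norm_ne_zero_iff.1 (he ▸ one_ne_zero))
  refine ((lipschitzWith_centralProjection he).hausdorffMeasure_image_le (Nat.cast_nonneg m)
    _).trans_lt (ENNReal.mul_lt_top (by simp) (isCompact_closedBall _ _).measure_lt_top)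

theorem hausdorffMeasure_sphere_pos (hV : finrank ℝ V = m + 1) :
    0 < μH[m] (Metric.sphere (0 : V) 1) := by
  have : Nontrivial V := Module.nontrivial_of_finrank_eq_succ hV
  obtain ⟨e, he⟩ := exists_norm_eq V zero_le_one
  have he0 : e ≠ 0 := norm_ne_zero_iff.1 (by rw [he]; exact one_ne_zero)
  have := isAddHaarMeasure_hausdorffMeasure_orthogonal hV he0
  calc 0 < μH[m] (Metric.closedBall (0 : (ℝ ∙ e)ᗮ) 1) :=
        Metric.measure_closedBall_pos _ _ one_pos
    _ ≤ μH[m] ((ℝ ∙ e)ᗮ.orthogonalProjectionOnto '' Metric.sphere 0 1) :=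
        measure_mono (closedBall_orthogonal_subset_image_sphere he)
    _ ≤ μH[m] (Metric.sphere (0 : V) 1) := by
        simpa using (ℝ ∙ e)ᗮ.lipschitzWith_orthogonalProjectionOnto.hausdorffMeasure_image_le
          (Nat.cast_nonneg m) (Metric.sphere (0 : V) 1)

theorem sphereIntegralAbsInner_pos (hV : finrank ℝ V = m + 1) {e : V} (he : ‖e‖ = 1) :
    0 < sphereIntegralAbsInner m e := by
  refine pos_iff_ne_zero.2 fun h0 => (hausdorffMeasure_sphere_pos hV).ne' ?_
  simpa [h0] using hausdorffMeasure_sphere_le_card_mul m (stdOrthonormalBasis ℝ V) he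

theorem sphereIntegralAbsInner_lt_top (hV : finrank ℝ V = m + 1) (v : V) :
    sphereIntegralAbsInner m v < ⊤ :=
  (sphereIntegralAbsInner_le m v).trans_lt
    (ENNReal.mul_lt_top ENNReal.ofReal_lt_top (hausdorffMeasure_sphere_lt_top hV))

end SphereMeasure

theorem statement_6_general {d : ℕ}
    (e : EuclideanSpace ℝ (Fin d)) (he : ‖e‖ = 1)
    (f : ℝ → EuclideanSpace ℝ (Fin d)) (hf : ContinuousOn f (Set.Icc 0 1)) :
    eVariationOn f (Set.Icc 0 1) =
      (∫⁻ θ in Metric.sphere (0 : EuclideanSpace ℝ (Fin d)) 1,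
          ENNReal.ofReal |⟪θ, e⟫_ℝ| ∂(μH[(d : ℝ) - 1]))⁻¹ *
        ∫⁻ θ in Metric.sphere (0 : EuclideanSpace ℝ (Fin d)) 1,
          eVariationOn (fun t => ⟪θ, f t⟫_ℝ) (Set.Icc 0 1) ∂(μH[(d : ℝ) - 1]) := by
  obtain _ | m := d
  · simp [Subsingleton.elim e 0] at he
  have hV : finrank ℝ (EuclideanSpace ℝ (Fin (m + 1))) = m + 1 := finrank_euclideanSpace_fin
  rw [show ((m + 1 : ℕ) : ℝ) - 1 = m by push_cast; ring, lintegral_eVariationOn_inner _ he hf,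
    ← sphereIntegralAbsInner, ← mul_assoc,
    ENNReal.inv_mul_cancel (sphereIntegralAbsInner_pos hV he).ne'
      (sphereIntegralAbsInner_lt_top hV e).ne, one_mul]

/-- For a rectifiable curve `f : [0,1] → ℝ^d`, with
`f_θ(t) = ⟪θ, f t⟫` and `V(f_θ)` the total variation of `f_θ` on `[0,1]`,
one has `𝓛(f) = (1/c_d) ∫_{S^{d-1}} V(f_θ) dθ`, where the surface measure on the
sphere is the `(d-1)`-dimensional Hausdorff measure restricted to it and
`c_d = ∫_{S^{d-1}} |⟪θ,e⟫| dθ` for a unit vector `e`. -/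
theorem statement_6 {d : ℕ}
    (e : EuclideanSpace ℝ (Fin d)) (he : ‖e‖ = 1)
    (f : ℝ → EuclideanSpace ℝ (Fin d)) (hf : ContinuousOn f (Set.Icc 0 1))
    (hrect : eVariationOn f (Set.Icc 0 1) ≠ ⊤) :
    eVariationOn f (Set.Icc 0 1) =
      (∫⁻ θ in Metric.sphere (0 : EuclideanSpace ℝ (Fin d)) 1,
          ENNReal.ofReal |⟪θ, e⟫_ℝ| ∂(μH[(d : ℝ) - 1]))⁻¹ *
        ∫⁻ θ in Metric.sphere (0 : EuclideanSpace ℝ (Fin d)) 1,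
          eVariationOn (fun t => ⟪θ, f t⟫_ℝ) (Set.Icc 0 1) ∂(μH[(d : ℝ) - 1]) :=
  statement_6_general e he f hf
end

section
/- Let f:[0,1]→ℝ^d be a rectifiable curve. For θ ∈ S^{d−1}, r ∈ [0,∞) and a Borel subset A of Im f, set N_{θ,r}(A) = Card(A ∩ D_{θ,r}) ∈ ℕ ∪ {∞}. Then for every Borel subset A of Im f, the function (θ,r) ↦ N_{θ,r}(A) on S^{d−1} × [0,∞) is measurable with respect to the Lebesgue-completed σ-algebra (of the product of the surface measure on S^{d−1} and Lebesgue measure on [0,∞)). -/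
open MeasureTheory Filter
open scoped ENNReal NNReal InnerProductSpace Topology

/-!
Write `D_p = {z | ⟪p.1, z⟫ = p.2}`. Reparametrised by arc length, a rectifiable curve becomes
Lipschitz, so `A ⊆ g '' I` for a Lipschitz `g : ℝ → ℝ^d` and a bounded interval `I`; inner
regularity of Lebesgue measure on `g ⁻¹' A ∩ I` splits `A` into a σ-compact set `S` and a part
contained in `g '' N` with `N` null.

For σ-compact `S`, the cardinality of `S ∩ D_p` is the supremum over `n` of the number of dyadic
cubes of side `2⁻ⁿ` that it meets, and for each cube `Q` the set `{p | (S ∩ Q ∩ D_p).Nonempty}` is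
a countable union of projections of closed sets along compact factors, hence Borel. The
hyperplanes meeting `g '' N` form a null set by Fubini: for fixed `θ` the admissible `r` lie in
`(fun t => ⟪θ, g t⟫) '' N`, a Lipschitz image of a null subset of `ℝ`.
-/

theorem IsSigmaCompact.inter {X : Type*} [TopologicalSpace X] [T2Space X] {s t : Set X}
    (hs : IsSigmaCompact s) (ht : IsSigmaCompact t) : IsSigmaCompact (s ∩ t) := by
  obtain ⟨K, hK, rfl⟩ := hs
  obtain ⟨L, hL, rfl⟩ := ht
  rw [Set.iUnion_inter_iUnion]
  exact isSigmaCompact_iUnion _ fun m => isSigmaCompact_iUnion _ fun n =>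
    ((hK m).inter (hL n)).isSigmaCompact

theorem IsOpen.isSigmaCompact {X : Type*} [TopologicalSpace X] [T2Space X]
    [LocallyCompactSpace X] [SecondCountableTopology X] {U : Set X} (hU : IsOpen U) :
    IsSigmaCompact U := by
  have := hU.locallyCompactSpace
  exact isSigmaCompact_iff_sigmaCompactSpace.mpr inferInstance

section Projection

variable {P X : Type*} [TopologicalSpace P] [TopologicalSpace X] {R : Set (P × X)}

theorem isClosed_setOf_exists_mem_of_isCompact (hR : IsClosed R) {K : Set X}
    (hK : IsCompact K) : IsClosed {p | ∃ x ∈ K, (p, x) ∈ R} := by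
  have := isCompact_iff_compactSpace.mp hK
  have hR' : IsClosed {q : P × K | (q.1, (q.2 : X)) ∈ R} :=
    hR.preimage (continuous_fst.prodMk (continuous_subtype_val.comp continuous_snd))
  convert isClosedMap_fst_of_compactSpace _ hR' using 1
  ext p
  simp

theorem measurableSet_setOf_exists_mem_of_isSigmaCompact [MeasurableSpace P]
    [OpensMeasurableSpace P] (hR : IsClosed R) {S : Set X} (hS : IsSigmaCompact S) :
    MeasurableSet {p | ∃ x ∈ S, (p, x) ∈ R} := by
  obtain ⟨K, hK, rfl⟩ := hS
  have hunion : {p | ∃ x ∈ ⋃ n, K n, (p, x) ∈ R} = ⋃ n, {p | ∃ x ∈ K n, (p, x) ∈ R} := by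
    ext p
    simp only [Set.mem_iUnion, Set.mem_ofPred_eq]
    tauto
  rw [hunion]
  exact .iUnion fun n => (isClosed_setOf_exists_mem_of_isCompact hR (hK n)).measurableSet

end Projection

theorem Set.encard_eq_iSup_encard_image {X ι : Type*} (c : ℕ → X → ι)
    (hc : ∀ x y, x ≠ y → ∀ᶠ n in atTop, c n x ≠ c n y) (S : Set X) :
    S.encard = ⨆ n, (c n '' S).encard := by
  refine le_antisymm ?_ (iSup_le fun n => Set.encard_image_le _ _)
  refine ENat.forall_natCast_le_iff_le.mp fun k hk => ?_
  obtain ⟨T, hTS, hTk⟩ := Set.exists_subset_encard_eq hk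
  have hT : T.Finite := Set.finite_of_encard_eq_coe hTk
  have hinj : ∀ᶠ n in atTop, Set.InjOn (c n) T := by
    have hxy : ∀ x ∈ T, ∀ y ∈ T, ∀ᶠ n in atTop, c n x = c n y → x = y := fun x _ y _ => by
      by_cases h : x = y
      · exact Eventually.of_forall fun _ _ => h
      · exact (hc x y h).mono fun n hn heq => absurd heq hn
    exact (eventually_all_finite hT).mpr fun x hx => (eventually_all_finite hT).mpr (hxy x hx)
  obtain ⟨n, hn⟩ := hinj.exists
  calc (k : ℕ∞) = (c n '' T).encard := by rw [hn.encard_image, hTk]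
    _ ≤ (c n '' S).encard := Set.encard_le_encard (Set.image_mono hTS)
    _ ≤ ⨆ n, (c n '' S).encard := le_iSup (fun n => (c n '' S).encard) n

section Dyadic

variable {ι : Type*}

noncomputable def dyadicIndex (n : ℕ) (z : EuclideanSpace ℝ ι) : ι → ℤ :=
  fun i => ⌊2 ^ n * z i⌋

theorem eventually_dyadicIndex_ne {z w : EuclideanSpace ℝ ι} (h : z ≠ w) :
    ∀ᶠ n in atTop, dyadicIndex n z ≠ dyadicIndex n w := by
  obtain ⟨i, hi⟩ : ∃ i, z i ≠ w i := by
    by_contra! hc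
    exact h (PiLp.ext hc)
  have hpos : 0 < |z i - w i| := abs_pos.mpr (sub_ne_zero.mpr hi)
  have hlarge : ∀ᶠ n : ℕ in atTop, 1 ≤ (2 : ℝ) ^ n * |z i - w i| :=
    ((tendsto_pow_atTop_atTop_of_one_lt one_lt_two).atTop_mul_const hpos).eventually_ge_atTop 1
  filter_upwards [hlarge] with n hn heq
  have hfloor : ⌊2 ^ n * z i⌋ = ⌊2 ^ n * w i⌋ := congrFun heq i
  have := Int.abs_sub_lt_one_of_floor_eq_floor hfloor
  rw [← mul_sub, abs_mul, abs_of_pos (by positivity)] at this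
  linarith

variable [Fintype ι]

theorem isSigmaCompact_dyadicIndex_preimage (n : ℕ) (k : ι → ℤ) :
    IsSigmaCompact (dyadicIndex n ⁻¹' {k}) := by
  have hfiber : dyadicIndex n ⁻¹' {k} =
      {z : EuclideanSpace ℝ ι | ∀ i, (k i : ℝ) ≤ 2 ^ n * z i} ∩
        {z | ∀ i, 2 ^ n * z i < k i + 1} := by
    ext z
    simp only [Set.mem_preimage, Set.mem_singleton_iff, funext_iff, dyadicIndex,
      Int.floor_eq_iff, Set.mem_inter_iff, Set.mem_ofPred_eq, forall_and]
  have hclosed : IsClosed {z : EuclideanSpace ℝ ι | ∀ i, (k i : ℝ) ≤ 2 ^ n * z i} := by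
    simp only [Set.ofPred_forall]
    exact isClosed_iInter fun i => isClosed_le (by fun_prop) (by fun_prop)
  have hopen : IsOpen {z : EuclideanSpace ℝ ι | ∀ i, 2 ^ n * z i < k i + 1} := by
    simp only [Set.ofPred_forall]
    exact isOpen_iInter_of_finite fun i => isOpen_lt (by fun_prop) (by fun_prop)
  rw [hfiber]
  exact (isSigmaCompact_univ.of_isClosed_subset hclosed (Set.subset_univ _)).inter
    hopen.isSigmaCompact

theorem measurable_encard_setOf_mem_of_isSigmaCompact {P : Type*} [TopologicalSpace P]
    [MeasurableSpace P] [OpensMeasurableSpace P] {R : Set (P × EuclideanSpace ℝ ι)}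
    (hR : IsClosed R) {S : Set (EuclideanSpace ℝ ι)} (hS : IsSigmaCompact S) :
    Measurable fun p => ({z ∈ S | (p, z) ∈ R}.encard : ℝ≥0∞) := by
  have hcount : ∀ p, ({z ∈ S | (p, z) ∈ R}.encard : ℝ≥0∞) = ⨆ n, ∑' k,
      {p | ∃ z ∈ S ∩ dyadicIndex n ⁻¹' {k}, (p, z) ∈ R}.indicator 1 p := by
    intro p
    rw [Set.encard_eq_iSup_encard_image dyadicIndex (fun _ _ => eventually_dyadicIndex_ne),
      ENat.toENNReal_iSup]
    refine iSup_congr fun n => ?_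
    rw [← ENNReal.tsum_set_one, tsum_subtype _ fun _ => (1 : ℝ≥0∞)]
    refine tsum_congr fun k => ?_
    classical
    simp only [Set.indicator_apply, Pi.one_apply]
    refine if_congr ?_ rfl rfl
    simp only [Set.mem_image, Set.mem_ofPred_eq, Set.mem_inter_iff, Set.mem_preimage,
      Set.mem_singleton_iff, and_assoc, and_comm (b := dyadicIndex n _ = k)]
  simp_rw [hcount]
  exact .iSup fun n => .tsum fun k => measurable_const.indicator
    (measurableSet_setOf_exists_mem_of_isSigmaCompact hR
      (hS.inter (isSigmaCompact_dyadicIndex_preimage n k)))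

end Dyadic

theorem LipschitzWith.volume_image_le {f : ℝ → ℝ} {K : ℝ≥0} (hf : LipschitzWith K f)
    (s : Set ℝ) : volume (f '' s) ≤ K * volume s := by
  simpa only [hausdorffMeasure_real, ENNReal.rpow_one] using
    hf.hausdorffMeasure_image_le zero_le_one s

theorem measure_setOf_exists_inner_eq_eq_zero {E : Type*} [NormedAddCommGroup E]
    [InnerProductSpace ℝ E] [MeasurableSpace E] [OpensMeasurableSpace E]
    [SecondCountableTopology E] (μ : Measure E) {ν : Measure ℝ} [SFinite ν] (hν : ν ≪ volume)
    {g : ℝ → E} {K : ℝ≥0} (hg : LipschitzWith K g) {N : Set ℝ} (hN : volume N = 0) :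
    μ.prod ν {p : E × ℝ | ∃ t ∈ N, ⟪p.1, g t⟫_ℝ = p.2} = 0 := by
  choose V hNV hV hVvol using fun m : ℕ => Set.exists_isOpen_lt_of_lt N (m : ℝ≥0∞)⁻¹
    (by rw [hN]; exact ENNReal.inv_pos.mpr (ENNReal.natCast_ne_top m))
  have hR : IsClosed {q : (E × ℝ) × ℝ | ⟪q.1.1, g q.2⟫_ℝ = q.1.2} := by
    have := hg.continuous
    exact isClosed_eq (by fun_prop) (by fun_prop)
  -- the set to be measured need not be Borel; `M` is a Borel superset built from open `V m ⊇ N`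
  set M := ⋂ m, {p : E × ℝ | ∃ t ∈ V m, ⟪p.1, g t⟫_ℝ = p.2}
  have hM : MeasurableSet M := .iInter fun m =>
    measurableSet_setOf_exists_mem_of_isSigmaCompact hR (hV m).isSigmaCompact
  have hsub : {p : E × ℝ | ∃ t ∈ N, ⟪p.1, g t⟫_ℝ = p.2} ⊆ M := fun p ⟨t, ht, hp⟩ =>
    Set.mem_iInter.mpr fun m => ⟨t, hNV m ht, hp⟩
  have hsection : ∀ θ, volume (Prod.mk θ ⁻¹' M) = 0 := by
    intro θ
    set C := ‖innerSL ℝ θ‖₊ * K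
    have hθg : LipschitzWith C fun t => ⟪θ, g t⟫_ℝ := (innerSL ℝ θ).lipschitz.comp hg
    have hle : ∀ m : ℕ, volume (Prod.mk θ ⁻¹' M) ≤ C * (m : ℝ≥0∞)⁻¹ := fun m =>
      calc volume (Prod.mk θ ⁻¹' M)
          ≤ volume ((fun t => ⟪θ, g t⟫_ℝ) '' V m) := by
            refine measure_mono fun r hr => ?_
            obtain ⟨t, ht, hr⟩ := Set.mem_iInter.mp hr m
            exact ⟨t, ht, hr⟩
        _ ≤ C * volume (V m) := hθg.volume_image_le _
        _ ≤ C * (m : ℝ≥0∞)⁻¹ := by gcongr; exact (hVvol m).le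
    have hlim : Tendsto (fun m : ℕ => (C : ℝ≥0∞) * (m : ℝ≥0∞)⁻¹) atTop (𝓝 0) := by
      simpa using ENNReal.Tendsto.const_mul ENNReal.tendsto_inv_nat_nhds_zero
        (Or.inr ENNReal.coe_ne_top)
    exact nonpos_iff_eq_zero.mp (ge_of_tendsto' hlim hle)
  refine measure_mono_null hsub ?_
  rw [Measure.prod_apply hM]
  simp [hν (hsection _)]

theorem nullMeasurable_encard_inter_inner_eq {ι : Type*} [Fintype ι]
    (μ : Measure (EuclideanSpace ℝ ι)) {ν : Measure ℝ} [SFinite ν] (hν : ν ≪ volume)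
    {A S : Set (EuclideanSpace ℝ ι)} (hSA : S ⊆ A) (hS : IsSigmaCompact S)
    {g : ℝ → EuclideanSpace ℝ ι} {K : ℝ≥0} (hg : LipschitzWith K g) {N : Set ℝ}
    (hN : volume N = 0) (hAS : A \ S ⊆ g '' N) :
    NullMeasurable
      (fun p : EuclideanSpace ℝ ι × ℝ => ((A ∩ {z | ⟪p.1, z⟫_ℝ = p.2}).encard : ℝ≥0∞))
      (μ.prod ν) := by
  have hR : IsClosed
      {q : (EuclideanSpace ℝ ι × ℝ) × EuclideanSpace ℝ ι | ⟪q.1.1, q.2⟫_ℝ = q.1.2} :=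
    isClosed_eq (by fun_prop) (by fun_prop)
  refine ((measurable_encard_setOf_mem_of_isSigmaCompact hR hS).aemeasurable.congr
    ?_).nullMeasurable
  refine measure_mono_null (fun p hp => ?_) (measure_setOf_exists_inner_eq_eq_zero μ hν hg hN)
  obtain ⟨z, ⟨hzA, hzp⟩, hzS⟩ : ∃ z, z ∈ A ∩ {z | ⟪p.1, z⟫_ℝ = p.2} ∧ z ∉ S := by
    by_contra! h
    refine hp (congrArg _ (congrArg _ (Set.Subset.antisymm (fun z hz => ⟨hSA hz.1, hz.2⟩) ?_)))
    exact fun z hz => ⟨h z hz, hz.2⟩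
  obtain ⟨t, ht, rfl⟩ := hAS ⟨hzA, hzS⟩
  exact ⟨t, ht, hzp⟩

theorem HasConstantSpeedOnWith.lipschitzOnWith {E : Type*} [PseudoEMetricSpace E] {f : ℝ → E}
    {s : Set ℝ} {l : ℝ≥0} (h : HasConstantSpeedOnWith f s l) : LipschitzOnWith l f s := by
  have key : ∀ x ∈ s, ∀ y ∈ s, x ≤ y → edist (f x) (f y) ≤ l * edist x y := by
    intro x hx y hy hxy
    calc edist (f x) (f y) ≤ eVariationOn f (s ∩ Set.Icc x y) :=
          eVariationOn.edist_le f ⟨hx, le_rfl, hxy⟩ ⟨hy, hxy, le_rfl⟩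
      _ = ENNReal.ofReal (l * (y - x)) := h hx hy
      _ = l * edist x y := by
        rw [edist_comm, edist_dist, Real.dist_eq, abs_of_nonneg (sub_nonneg.mpr hxy),
          ENNReal.ofReal_mul l.coe_nonneg, ENNReal.ofReal_coe_nnreal]
  intro x hx y hy
  rcases le_total x y with hxy | hyx
  · exact key x hx y hy hxy
  · rw [edist_comm, edist_comm x]
    exact key y hy x hx hyx

theorem BoundedVariationOn.exists_lipschitzWith_image_subset {E : Type*} [NormedAddCommGroup E]
    [NormedSpace ℝ E] [FiniteDimensional ℝ E] {f : ℝ → E} {s : Set ℝ}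
    (hf : BoundedVariationOn f s) :
    ∃ g : ℝ → E, ∃ K : ℝ≥0, LipschitzWith K g ∧
      f '' s ⊆ g '' Set.Icc (-(eVariationOn f s).toReal) (eVariationOn f s).toReal := by
  rcases s.eq_empty_or_nonempty with rfl | ⟨a, ha⟩
  · exact ⟨0, 0, LipschitzWith.const 0, by simp⟩
  set L := (eVariationOn f s).toReal
  have hloc := hf.locallyBoundedVariationOn
  have hle : ∀ t, (eVariationOn f (s ∩ t)).toReal ≤ L := fun t =>
    ENNReal.toReal_mono hf (eVariationOn.mono f Set.inter_subset_left)
  have hbound : ∀ x ∈ s, variationOnFromTo f s a x ∈ Set.Icc (-L) L := by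
    intro x hx
    rcases le_total a x with hax | hxa
    · rw [Set.mem_Icc, variationOnFromTo.eq_of_le f s hax]
      constructor <;> linarith [hle (Set.Icc a x), (eVariationOn f (s ∩ Set.Icc a x)).toReal_nonneg]
    · rw [Set.mem_Icc, variationOnFromTo.eq_of_ge f s hxa]
      constructor <;> linarith [hle (Set.Icc x a), (eVariationOn f (s ∩ Set.Icc x a)).toReal_nonneg]
  obtain ⟨g, hg, hγg⟩ :=
    (has_unit_speed_naturalParameterization f hloc ha).lipschitzOnWith.extend_finite_dimension
  refine ⟨g, _, hg, ?_⟩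
  rintro _ ⟨x, hx, rfl⟩
  refine ⟨variationOnFromTo f s a x, hbound x hx, ?_⟩
  rw [← hγg (Set.mem_image_of_mem _ hx)]
  exact edist_eq_zero.mp (edist_naturalParameterization_eq_zero hloc ha hx)

theorem MeasurableSet.exists_isSigmaCompact_subset_measure_sdiff_eq_zero {X : Type*}
    [TopologicalSpace X] [MeasurableSpace X] [OpensMeasurableSpace X] [T2Space X]
    {μ : Measure X} [μ.InnerRegularCompactLTTop] {A : Set X} (hA : MeasurableSet A)
    (h'A : μ A ≠ ∞) : ∃ S ⊆ A, IsSigmaCompact S ∧ μ (A \ S) = 0 := by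
  choose K hKA hK hAK using fun m : ℕ =>
    hA.exists_isCompact_sdiff_lt h'A (ENNReal.inv_ne_zero.mpr (ENNReal.natCast_ne_top m))
  refine ⟨⋃ m, K m, Set.iUnion_subset hKA, isSigmaCompact_iUnion _ fun m => (hK m).isSigmaCompact,
    nonpos_iff_eq_zero.mp (ge_of_tendsto' ENNReal.tendsto_inv_nat_nhds_zero fun m => ?_)⟩
  exact (measure_mono (Set.sdiff_subset_sdiff_right (Set.subset_iUnion K m))).trans (hAK m).le

theorem statement_8_general {d : ℕ}
    (f : ℝ → EuclideanSpace ℝ (Fin d))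
    (hrect : eVariationOn f (Set.Icc 0 1) ≠ ⊤)
    (A : Set (EuclideanSpace ℝ (Fin d))) (hA : A ⊆ f '' Set.Icc 0 1)
    (hAm : MeasurableSet A) :
    NullMeasurable
      (fun p : EuclideanSpace ℝ (Fin d) × ℝ =>
        ((A ∩ {z | ⟪p.1, z⟫_ℝ = p.2}).encard : ℝ≥0∞))
      (((μH[(d : ℝ) - 1]).restrict (Metric.sphere 0 1)).prod
        (volume.restrict (Set.Ioi 0))) := by
  obtain ⟨g, K, hg, hfg⟩ := BoundedVariationOn.exists_lipschitzWith_image_subset hrect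
  set I := Set.Icc (-(eVariationOn f (Set.Icc 0 1)).toReal) (eVariationOn f (Set.Icc 0 1)).toReal
  have hT : MeasurableSet (g ⁻¹' A ∩ I) := (hg.continuous.measurable hAm).inter measurableSet_Icc
  obtain ⟨C, hCT, hC, hTC⟩ := hT.exists_isSigmaCompact_subset_measure_sdiff_eq_zero
    ((measure_mono Set.inter_subset_right).trans_lt (measure_Icc_lt_top (μ := volume))).ne
  refine nullMeasurable_encard_inter_inner_eq _ Measure.restrict_le_self.absolutelyContinuous
    (Set.image_subset_iff.mpr fun t ht => (hCT ht).1) (hC.image hg.continuous) hg hTC ?_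
  rintro z ⟨hzA, hzC⟩
  obtain ⟨t, ht, rfl⟩ := hfg (hA hzA)
  exact ⟨t, ⟨⟨hzA, ht⟩, fun htC => hzC ⟨t, htC, rfl⟩⟩, rfl⟩

/-- For a rectifiable curve `f : [0,1] → ℝ^d` and a Borel subset
`A` of `Im f`, the map `(θ, r) ↦ N_{θ,r}(A) = Card (A ∩ D_{θ,r})` is measurable with
respect to the Lebesgue completion of the product of the surface measure on the unit
sphere (the `(d-1)`-dimensional Hausdorff measure restricted to it) and the Lebesgue
measure on `(0,∞)`; i.e. it is null-measurable for that product measure. -/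
theorem statement_8 {d : ℕ}
    (f : ℝ → EuclideanSpace ℝ (Fin d)) (hf : ContinuousOn f (Set.Icc 0 1))
    (hrect : eVariationOn f (Set.Icc 0 1) ≠ ⊤)
    (A : Set (EuclideanSpace ℝ (Fin d))) (hA : A ⊆ f '' Set.Icc 0 1)
    (hAm : MeasurableSet A) :
    NullMeasurable
      (fun p : EuclideanSpace ℝ (Fin d) × ℝ =>
        ((A ∩ {z | ⟪p.1, z⟫_ℝ = p.2}).encard : ℝ≥0∞))
      (((μH[(d : ℝ) - 1]).restrict (Metric.sphere 0 1)).prod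
        (volume.restrict (Set.Ioi 0))) :=
  statement_8_general f hrect A hA hAm
end

section
/- Let g:[0,1]→ℝ^d be a curve with 0 < 𝓛(g) < ∞, |g′(t)| = 𝓛(g) for Lebesgue-a.e. t ∈ [0,1], and ℋ¹(Im g) = 𝓛(g). Let μ be a probability measure on [0,1] and let c > 0. Then μ ≥ cλ on [0,1] if and only if for every Borel set A ⊆ Im g one has (μ ∘ g^{−1})(A) ≥ c · ℋ¹(A)/𝓛(g), where μ ∘ g^{−1} denotes the pushforward of μ by g. -/
/-!
A speed of at least `L` forces the variation of `g` on `[x, y]` to be at least `L (y - x)`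
(the variation function `V` has `V' ≥ ‖g'‖` a.e., and `∫ V' ≤ V y - V x` for monotone `V`).
Since the total variation is exactly `L`, the variation on `[x, y]` is also at most `L (y - x)`,
so `g` is `L`-Lipschitz and `ℋ¹(g '' S) ≤ L λ(S)`; this gives the forward implication.
Conversely, for measurable `t ⊆ [0, 1]` let `A = g '' [0, 1] \ B` with `B` a measurable hull of
`g '' ([0, 1] \ t)`. Then `g⁻¹(A) ∩ [0, 1] ⊆ t`, and `ℋ¹(g '' [0, 1]) = L` together with
`ℋ¹(B) ≤ L λ([0, 1] \ t)` forces `ℋ¹(A) ≥ L λ(t)`.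
-/

open MeasureTheory Filter Set
open scoped ENNReal NNReal Topology

theorem MonotoneOn.mul_sub_le_sub_of_le_deriv {f : ℝ → ℝ} {a b m : ℝ} (hab : a ≤ b)
    (hf : MonotoneOn f (Icc a b)) (hm : ∀ᵐ x ∂volume.restrict (Icc a b), m ≤ deriv f x) :
    m * (b - a) ≤ f b - f a := by
  rw [← uIcc_of_le hab] at hf
  calc m * (b - a) = ∫ _ in a..b, m := by simp [mul_comm]
    _ ≤ ∫ x in a..b, deriv f x :=
      intervalIntegral.integral_mono_ae_restrict hab intervalIntegrable_const
        hf.intervalIntegrable_deriv hm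
    _ ≤ f b - f a := (uIcc_of_le (sub_nonneg.2 (hf (by simp) (by simp [hab]) hab)) ▸
        hf.intervalIntegral_deriv_mem_uIcc).2

section Curve

variable {E : Type*} [NormedAddCommGroup E] [NormedSpace ℝ E]

theorem norm_le_of_hasDerivAt_of_norm_sub_le {g : ℝ → E} {f : ℝ → ℝ} {g' : E} {f' x : ℝ}
    (hg : HasDerivAt g g' x) (hf : HasDerivAt f f' x)
    (h : ∀ᶠ y in 𝓝[>] x, ‖g y - g x‖ ≤ f y - f x) : ‖g'‖ ≤ f' := by
  have hg_slope : Tendsto (fun y => ‖g y - g x‖ / (y - x)) (𝓝[>] x) (𝓝 ‖g'‖) := by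
    refine ((hasDerivAt_iff_tendsto_slope.1 hg).norm.mono_left (nhdsGT_le_nhdsNE x)).congr' ?_
    filter_upwards [self_mem_nhdsWithin] with y (hy : x < y)
    rw [slope_def_module, norm_smul, Real.norm_eq_abs, abs_inv, abs_of_pos (sub_pos.2 hy),
      div_eq_inv_mul]
  have hf_slope : Tendsto (fun y => (f y - f x) / (y - x)) (𝓝[>] x) (𝓝 f') := by
    simpa only [slope_fun_def_field] using
      (hasDerivAt_iff_tendsto_slope.1 hf).mono_left (nhdsGT_le_nhdsNE x)
  refine le_of_tendsto_of_tendsto hg_slope hf_slope ?_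
  filter_upwards [h, self_mem_nhdsWithin] with y hy (hxy : x < y)
  gcongr

theorem ofReal_mul_le_eVariationOn_of_le_norm_deriv {g g' : ℝ → E} {a b m : ℝ} (hab : a ≤ b)
    (h : ∀ᵐ t ∂volume.restrict (Icc a b), HasDerivAt g (g' t) t ∧ m ≤ ‖g' t‖) :
    ENNReal.ofReal (m * (b - a)) ≤ eVariationOn g (Icc a b) := by
  by_cases htop : eVariationOn g (Icc a b) = ⊤
  · simp [htop]
  have hfin : ∀ u, eVariationOn g (Icc a b ∩ u) ≠ ⊤ := fun u =>
    ne_top_of_le_ne_top htop (eVariationOn.mono g inter_subset_left)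
  set V : ℝ → ℝ := fun x => (eVariationOn g (Icc a b ∩ Icc a x)).toReal
  have hV : Monotone V := fun x y hxy => ENNReal.toReal_mono (hfin _)
    (eVariationOn.mono g (inter_subset_inter_right _ (Icc_subset_Icc_right hxy)))
  have hV_sub : ∀ x y, a ≤ x → x ≤ y → y ≤ b → ‖g y - g x‖ ≤ V y - V x := by
    intro x y hax hxy hyb
    have hadd := congrArg ENNReal.toReal
      (eVariationOn.Icc_add_Icc g (s := Icc a b) hax hxy ⟨hax, hxy.trans hyb⟩)
    rw [ENNReal.toReal_add (hfin _) (hfin _)] at hadd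
    have hdist : ‖g y - g x‖ ≤ (eVariationOn g (Icc a b ∩ Icc x y)).toReal := by
      rw [← dist_eq_norm, dist_edist]
      exact ENNReal.toReal_mono (hfin _) (eVariationOn.edist_le g
        ⟨⟨hax.trans hxy, hyb⟩, hxy, le_rfl⟩ ⟨⟨hax, hxy.trans hyb⟩, le_rfl, hxy⟩)
    simp only [V]
    linarith
  have hderiv : ∀ᵐ x ∂volume.restrict (Icc a b), m ≤ deriv V x := by
    rw [← restrict_Ioo_eq_restrict_Icc] at h ⊢
    filter_upwards [h, ae_restrict_of_ae hV.ae_differentiableAt,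
      ae_restrict_mem measurableSet_Ioo] with x ⟨hgx, hm⟩ hVx hx
    refine hm.trans (norm_le_of_hasDerivAt_of_norm_sub_le hgx hVx.hasDerivAt ?_)
    filter_upwards [Ioo_mem_nhdsGT hx.2] with y hy
    exact hV_sub x y hx.1.le hy.1.le hy.2.le
  have hmono := (hV.monotoneOn (Icc a b)).mul_sub_le_sub_of_le_deriv hab hderiv
  have hVa : 0 ≤ V a := ENNReal.toReal_nonneg
  refine ENNReal.ofReal_le_of_le_toReal ?_
  simpa [V] using hmono.trans (sub_le_self _ hVa)

theorem lipschitzOnWith_of_le_norm_deriv_of_eVariationOn_eq {g g' : ℝ → E} {a b : ℝ} {L : ℝ≥0}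
    (h : ∀ᵐ t ∂volume.restrict (Icc a b), HasDerivAt g (g' t) t ∧ (L : ℝ) ≤ ‖g' t‖)
    (hvar : eVariationOn g (Icc a b) = L * ENNReal.ofReal (b - a)) :
    LipschitzOnWith L g (Icc a b) := by
  have lower : ∀ x y, a ≤ x → x ≤ y → y ≤ b →
      (L : ℝ≥0∞) * ENNReal.ofReal (y - x) ≤ eVariationOn g (Icc x y) := fun x y hax hxy hyb => by
    rw [← ENNReal.ofReal_coe_nnreal, ← ENNReal.ofReal_mul L.coe_nonneg]
    exact ofReal_mul_le_eVariationOn_of_le_norm_deriv hxy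
      (ae_restrict_of_ae_restrict_of_subset (Icc_subset_Icc hax hyb) h)
  have split : ∀ x y z, x ≤ y → y ≤ z →
      eVariationOn g (Icc x y) + eVariationOn g (Icc y z) = eVariationOn g (Icc x z) :=
    fun x y z hxy hyz => by
      simpa only [univ_inter] using eVariationOn.Icc_add_Icc g (s := univ) hxy hyz (mem_univ y)
  have key : ∀ x ∈ Icc a b, ∀ y ∈ Icc a b, x ≤ y →
      edist (g x) (g y) ≤ L * edist x y := by
    rintro x ⟨hax, -⟩ y ⟨-, hyb⟩ hxy
    rw [edist_comm x, edist_dist y x, Real.dist_eq, abs_of_nonneg (sub_nonneg.2 hxy)]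
    refine (eVariationOn.edist_le g (s := Icc x y) ⟨le_rfl, hxy⟩ ⟨hxy, le_rfl⟩).trans ?_
    set P := (L : ℝ≥0∞) * ENNReal.ofReal (x - a)
    set R := (L : ℝ≥0∞) * ENNReal.ofReal (b - y)
    have hPR : P + R ≠ ⊤ := by finiteness
    refine ENNReal.le_of_add_le_add_right hPR ?_
    calc eVariationOn g (Icc x y) + (P + R)
        ≤ eVariationOn g (Icc x y) + (eVariationOn g (Icc a x) + eVariationOn g (Icc y b)) := by
          gcongr
          · exact lower a x le_rfl hax (hxy.trans hyb)
          · exact lower y b (hax.trans hxy) hyb le_rfl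
      _ = L * ENNReal.ofReal (b - a) := by
          rw [← hvar, ← split a x b hax (hxy.trans hyb), ← split x y b hxy hyb]
          ring
      _ = L * ENNReal.ofReal (y - x) + (P + R) := by
          simp only [P, R, ← mul_add]
          rw [← ENNReal.ofReal_add (sub_nonneg.2 hax) (sub_nonneg.2 hyb),
            ← ENNReal.ofReal_add (sub_nonneg.2 hxy) (by linarith)]
          ring_nf
  intro x hx y hy
  rcases le_total x y with hxy | hyx
  · exact key x hx y hy hxy
  · rw [edist_comm, edist_comm x]
    exact key y hy x hx hyx

end Curve

section Hausdorff

variable {X : Type*} [EMetricSpace X] [MeasurableSpace X] [BorelSpace X]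

theorem LipschitzOnWith.hausdorffMeasure_one_image_le {f : ℝ → X} {K : ℝ≥0} {s : Set ℝ}
    (hf : LipschitzOnWith K f s) : μH[1] (f '' s) ≤ K * volume s := by
  simpa [hausdorffMeasure_real] using hf.hausdorffMeasure_image_le zero_le_one

theorem LipschitzOnWith.div_le_measure_preimage_of_smul_restrict_le {g : ℝ → X} {K : ℝ≥0}
    {s : Set ℝ} (hg : LipschitzOnWith K g s) {c : ℝ≥0∞} {μ : Measure ℝ}
    (hμ : c • volume.restrict s ≤ μ) {A : Set X} (hA : A ⊆ g '' s) :
    c * μH[1] A / K ≤ μ (g ⁻¹' A ∩ s) := by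
  have hcover : A ⊆ g '' (g ⁻¹' A ∩ s) := by
    rintro _ ha
    obtain ⟨t, ht, rfl⟩ := hA ha
    exact ⟨t, ⟨ha, ht⟩, rfl⟩
  refine ENNReal.div_le_of_le_mul ?_
  calc c * μH[1] A ≤ c * (K * volume (g ⁻¹' A ∩ s)) :=
        mul_le_mul_right ((measure_mono hcover).trans
          (hg.mono inter_subset_right).hausdorffMeasure_one_image_le) c
    _ = (c • volume.restrict s) (g ⁻¹' A ∩ s) * K := by
        rw [Measure.smul_apply, smul_eq_mul, Measure.restrict_eq_self _ inter_subset_right]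
        ring
    _ ≤ μ (g ⁻¹' A ∩ s) * K := by gcongr

theorem LipschitzOnWith.exists_measurableSet_preimage_subset {g : ℝ → X} {K : ℝ≥0} {s : Set ℝ}
    (hs : IsCompact s) (hg : LipschitzOnWith K g s) (hlen : K * volume s ≤ μH[1] (g '' s))
    {t : Set ℝ} (ht : MeasurableSet t) :
    ∃ A ⊆ g '' s, MeasurableSet A ∧ g ⁻¹' A ∩ s ⊆ t ∧ K * volume (s ∩ t) ≤ μH[1] A := by
  set B := toMeasurable μH[1] (g '' (s \ t))
  refine ⟨g '' s \ B, sdiff_subset,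
    (hs.image_of_continuousOn hg.continuousOn).measurableSet.diff (measurableSet_toMeasurable _ _),
    fun x ⟨hxA, hxs⟩ => by_contra fun hxt => hxA.2 (subset_toMeasurable _ _ ⟨x, ⟨hxs, hxt⟩, rfl⟩),
    ?_⟩
  have hfin : (K : ℝ≥0∞) * volume (s \ t) ≠ ⊤ :=
    ENNReal.mul_ne_top ENNReal.coe_ne_top
      (measure_mono sdiff_subset |>.trans_lt hs.measure_lt_top).ne
  refine ENNReal.le_of_add_le_add_right hfin ?_
  calc K * volume (s ∩ t) + K * volume (s \ t) = K * volume s := by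
        rw [← mul_add, measure_inter_add_sdiff s ht]
    _ ≤ μH[1] (g '' s) := hlen
    _ ≤ μH[1] (g '' s \ B) + μH[1] B :=
        (measure_mono (sdiff_union_self.symm ▸ subset_union_left)).trans (measure_union_le _ _)
    _ ≤ μH[1] (g '' s \ B) + K * volume (s \ t) := by
        rw [measure_toMeasurable]
        gcongr
        exact (hg.mono sdiff_subset).hausdorffMeasure_one_image_le

theorem LipschitzOnWith.smul_restrict_le_of_div_le_measure_preimage {g : ℝ → X} {K : ℝ≥0}
    {s : Set ℝ} (hs : IsCompact s) (hg : LipschitzOnWith K g s) (hK : K ≠ 0)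
    (hlen : K * volume s ≤ μH[1] (g '' s)) {c : ℝ≥0∞} {μ : Measure ℝ}
    (h : ∀ A ⊆ g '' s, MeasurableSet A → c * μH[1] A / K ≤ μ (g ⁻¹' A ∩ s)) :
    c • volume.restrict s ≤ μ := by
  refine Measure.le_iff.2 fun t ht => ?_
  obtain ⟨A, hAs, hA, hpre, hKA⟩ := hg.exists_measurableSet_preimage_subset hs hlen ht
  calc (c • volume.restrict s) t = c * volume (s ∩ t) := by
        rw [Measure.smul_apply, smul_eq_mul, Measure.restrict_apply ht, inter_comm]
    _ ≤ c * μH[1] A / K := by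
        rw [ENNReal.le_div_iff_mul_le (.inl (by exact_mod_cast hK)) (.inl ENNReal.coe_ne_top),
          mul_assoc, mul_comm _ (K : ℝ≥0∞)]
        gcongr
    _ ≤ μ (g ⁻¹' A ∩ s) := h A hAs hA
    _ ≤ μ t := measure_mono hpre

end Hausdorff

theorem statement_13_general {d : ℕ}
    (g : ℝ → EuclideanSpace ℝ (Fin d))
    (hpos : eVariationOn g (Set.Icc 0 1) ≠ 0)
    (hrect : eVariationOn g (Set.Icc 0 1) ≠ ⊤)
    (g' : ℝ → EuclideanSpace ℝ (Fin d))
    (hderiv : ∀ᵐ t ∂(volume.restrict (Set.Icc (0:ℝ) 1)),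
      HasDerivAt g (g' t) t ∧ ‖g' t‖ = (eVariationOn g (Set.Icc 0 1)).toReal)
    (hlen : μH[1] (g '' Set.Icc 0 1) = eVariationOn g (Set.Icc 0 1))
    (μ : Measure ℝ)
    (c : ℝ) :
    (ENNReal.ofReal c • volume.restrict (Set.Icc (0:ℝ) 1) ≤ μ) ↔
      ∀ A : Set (EuclideanSpace ℝ (Fin d)), A ⊆ g '' Set.Icc 0 1 → MeasurableSet A →
        ENNReal.ofReal c * μH[1] A / eVariationOn g (Set.Icc 0 1) ≤
          μ (g ⁻¹' A ∩ Set.Icc 0 1) := by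
  lift eVariationOn g (Icc 0 1) to ℝ≥0 using hrect with L hL
  rw [ENNReal.coe_toReal] at hderiv
  have hunit : (L : ℝ≥0∞) * volume (Icc (0 : ℝ) 1) = L := by simp
  have hlip : LipschitzOnWith L g (Icc 0 1) :=
    lipschitzOnWith_of_le_norm_deriv_of_eVariationOn_eq
      (hderiv.mono fun t ht => ⟨ht.1, ht.2.ge⟩) (by simp [← hL])
  exact ⟨fun hμ A hA _ => hlip.div_le_measure_preimage_of_smul_restrict_le hμ hA,
    hlip.smul_restrict_le_of_div_le_measure_preimage isCompact_Icc (by exact_mod_cast hpos)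
      (hunit.trans hlen.symm).le⟩

/-- Let `g : [0,1] → ℝ^d` be a curve with `0 < 𝓛(g) < ∞`,
constant speed `|g'(t)| = 𝓛(g)` a.e., and `ℋ¹(Im g) = 𝓛(g)`. Let `μ` be a
probability measure on `[0,1]` (a probability measure on `ℝ` supported in `[0,1]`)
and `c > 0`. Then `μ ≥ c·λ` on `[0,1]` iff for every Borel set `A ⊆ Im g`,
`(μ ∘ g⁻¹)(A) ≥ c · ℋ¹(A) / 𝓛(g)`. -/
theorem statement_13 {d : ℕ}
    (g : ℝ → EuclideanSpace ℝ (Fin d)) (hg : ContinuousOn g (Set.Icc 0 1))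
    (hpos : eVariationOn g (Set.Icc 0 1) ≠ 0)
    (hrect : eVariationOn g (Set.Icc 0 1) ≠ ⊤)
    (g' : ℝ → EuclideanSpace ℝ (Fin d))
    (hderiv : ∀ᵐ t ∂(volume.restrict (Set.Icc (0:ℝ) 1)),
      HasDerivAt g (g' t) t ∧ ‖g' t‖ = (eVariationOn g (Set.Icc 0 1)).toReal)
    (hlen : μH[1] (g '' Set.Icc 0 1) = eVariationOn g (Set.Icc 0 1))
    (μ : Measure ℝ) [IsProbabilityMeasure μ] (hμsupp : μ (Set.Icc (0:ℝ) 1)ᶜ = 0)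
    (c : ℝ) (hc : 0 < c) :
    (ENNReal.ofReal c • volume.restrict (Set.Icc (0:ℝ) 1) ≤ μ) ↔
      ∀ A : Set (EuclideanSpace ℝ (Fin d)), A ⊆ g '' Set.Icc 0 1 → MeasurableSet A →
        ENNReal.ofReal c * μH[1] A / eVariationOn g (Set.Icc 0 1) ≤
          μ (g ⁻¹' A ∩ Set.Icc 0 1) :=
  statement_13_general g hpos hrect g' hderiv hlen μ c
end

section
/- Under the model below, with f*_n := f̂_{n, a_n⌊𝓛(g)/a_n⌋}, the empirical distortion Δ_n(f*_n) converges in probability to 0 as n → ∞. -/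
open MeasureTheory Filter
open scoped ENNReal NNReal InnerProductSpace Topology

noncomputable section

/-- Empirical distortion `Δ_n(f) = (1/n) Σ_{i<n} V (d (x i, Im f))` of a curve `f`
with respect to the points `x 0, …, x (n-1)`. -/
def empDistortion {d : ℕ} (V : ℝ → ℝ) (n : ℕ) (x : ℕ → EuclideanSpace ℝ (Fin d))
    (f : ℝ → EuclideanSpace ℝ (Fin d)) : ℝ :=
  (n : ℝ)⁻¹ * ∑ i ∈ Finset.range n, V (Metric.infDist (x i) (f '' Set.Icc 0 1))

/-- The family `M_c` of probability measures on `[0,1]` dominating `c` times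
Lebesgue measure on `[0,1]` (as measures on `ℝ` supported in `[0,1]`). -/
def Mc (c : ℝ) : Set (Measure ℝ) :=
  {μ | IsProbabilityMeasure μ ∧ μ (Set.Icc (0:ℝ) 1)ᶜ = 0 ∧
    ENNReal.ofReal c • volume.restrict (Set.Icc (0:ℝ) 1) ≤ μ}

/-- Lévy–Prokhorov distance from a measure to the family `M_c`. -/
def distToMc (c : ℝ) (μ : Measure ℝ) : ℝ :=
  sInf (levyProkhorovDist μ '' Mc c)

/-- `T(f,x)`: the largest `t ∈ [0,1]` at which `|x - f t|` is minimal. -/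
def Tmax {d : ℕ} (f : ℝ → EuclideanSpace ℝ (Fin d)) (x : EuclideanSpace ℝ (Fin d)) : ℝ :=
  sSup {t ∈ Set.Icc (0:ℝ) 1 | dist x (f t) = Metric.infDist x (f '' Set.Icc 0 1)}

/-- Empirical measure `(1/n) Σ_{i<n} δ_{T(f, x i)}` on `[0,1] ⊆ ℝ`. -/
def empT {d : ℕ} (n : ℕ) (f : ℝ → EuclideanSpace ℝ (Fin d))
    (x : ℕ → EuclideanSpace ℝ (Fin d)) : Measure ℝ :=
  (n : ℝ≥0∞)⁻¹ • ∑ i ∈ Finset.range n, Measure.dirac (Tmax f (x i))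

/-- The penalized criterion `L² 𝒟(empirical T-measure, M_c) + Δ_n(f)`. -/
def crit {d : ℕ} (c : ℝ) (V : ℝ → ℝ) (n : ℕ) (x : ℕ → EuclideanSpace ℝ (Fin d))
    (f : ℝ → EuclideanSpace ℝ (Fin d)) (L : ℝ) : ℝ :=
  L ^ 2 * distToMc c (empT n f x) + empDistortion V n x f

end

/-!
Shrinking `g` towards `g 0` by the homothety of ratio `L / 𝓛(g)` gives an admissible curve of
length at most `L` which stays within `𝓛(g) - L` of `g`. For `L = a_n ⌊𝓛(g)/a_n⌋` this gap is
below `a_n`, so monotonicity and quasi-subadditivity of `V` bound `Δ_n(f*_n)` by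
`C ((1/n) Σ V |ε_i^n| + V a_n)`, where the first term tends to `0` in probability and the
second deterministically.
-/

theorem mul_natFloor_div_le {a ℓ : ℝ} (ha : 0 < a) (hℓ : 0 ≤ ℓ) : a * ⌊ℓ / a⌋₊ ≤ ℓ :=
  (le_div_iff₀' ha).mp (Nat.floor_le (div_nonneg hℓ ha.le))

theorem sub_mul_natFloor_div_lt {a : ℝ} (ha : 0 < a) (ℓ : ℝ) : ℓ - a * ⌊ℓ / a⌋₊ < a := by
  have := (div_lt_iff₀' ha).mp (Nat.lt_floor_add_one (ℓ / a))
  linarith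

section Homothety

variable {E : Type*} [NormedAddCommGroup E] [NormedSpace ℝ E]

theorem lipschitzWith_homothety (p : E) (c : ℝ) :
    LipschitzWith ‖c‖₊ (AffineMap.homothety p c : E → E) :=
  LipschitzWith.of_dist_le_mul fun x y => le_of_eq <| by
    rw [dist_eq_norm, dist_eq_norm, AffineMap.homothety_apply, AffineMap.homothety_apply,
      vsub_eq_sub, vsub_eq_sub, vadd_eq_add, vadd_eq_add, coe_nnnorm, ← norm_smul]
    congr 1
    module

theorem exists_eVariationOn_le_dist_le {α : Type*} [LinearOrder α] [TopologicalSpace α]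
    {g : α → E} {s : Set α} (hg : ContinuousOn g s) (hfin : eVariationOn g s ≠ ⊤)
    {x₀ : α} (hx₀ : x₀ ∈ s) {L : ℝ} (hL₀ : 0 ≤ L) (hL : L ≤ (eVariationOn g s).toReal) :
    ∃ f : α → E, ContinuousOn f s ∧ eVariationOn f s ≤ ENNReal.ofReal L ∧
      ∀ u ∈ s, dist (g u) (f u) ≤ (eVariationOn g s).toReal - L := by
  set ℓ := (eVariationOn g s).toReal
  set c := L / ℓ
  have hc₀ : 0 ≤ c := div_nonneg hL₀ ENNReal.toReal_nonneg
  have hc₁ : c ≤ 1 := div_le_one_of_le₀ hL ENNReal.toReal_nonneg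
  -- if `ℓ = 0` then `c = 0` by the junk value of division, and also `L = 0`
  have hcℓ : c * ℓ = L := div_mul_cancel_of_imp fun h => le_antisymm (h ▸ hL) hL₀
  refine ⟨AffineMap.homothety (g x₀) c ∘ g,
    (lipschitzWith_homothety (g x₀) c).continuous.comp_continuousOn hg, ?_, fun u hu => ?_⟩
  · calc eVariationOn (AffineMap.homothety (g x₀) c ∘ g) s
        ≤ ‖c‖₊ * eVariationOn g s :=
          (lipschitzWith_homothety (g x₀) c).lipschitzOnWith.comp_eVariationOn_le
            (Set.mapsTo_univ g s)
      _ = ENNReal.ofReal L := by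
          rw [← ENNReal.ofReal_toReal hfin, ← hcℓ, ENNReal.ofReal_mul hc₀,
            Real.nnnorm_of_nonneg hc₀, ENNReal.ofReal_eq_coe_nnreal hc₀]
  · have hdist : dist (g x₀) (g u) ≤ ℓ := by
      rw [← ENNReal.ofReal_le_ofReal_iff ENNReal.toReal_nonneg, ← edist_dist,
        ENNReal.ofReal_toReal hfin]
      exact eVariationOn.edist_le g hx₀ hu
    calc dist (g u) (AffineMap.homothety (g x₀) c (g u))
        = (1 - c) * dist (g x₀) (g u) := by
          rw [dist_self_homothety, Real.norm_of_nonneg (by linarith)]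
      _ ≤ (1 - c) * ℓ := by gcongr
      _ = ℓ - L := by rw [sub_mul, one_mul, hcℓ]

end Homothety

theorem infDist_add_image_le {α E : Type*} [SeminormedAddCommGroup E] {f : α → E} {s : Set α}
    {u : α} (hu : u ∈ s) (y e : E) :
    Metric.infDist (y + e) (f '' s) ≤ ‖e‖ + dist y (f u) := by
  grw [Metric.infDist_le_dist_of_mem (Set.mem_image_of_mem f hu), dist_triangle _ y,
    dist_self_add_left]

theorem empDistortion_le_of_infDist_le {d : ℕ} {V : ℝ → ℝ} (hV : MonotoneOn V (Set.Ici 0))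
    {C : ℝ} (hVsub : ∀ x ∈ Set.Ici (0:ℝ), ∀ y ∈ Set.Ici (0:ℝ), V (x + y) ≤ C * (V x + V y))
    {n : ℕ} (hn : n ≠ 0) {x : ℕ → EuclideanSpace ℝ (Fin d)} {f : ℝ → EuclideanSpace ℝ (Fin d)}
    {e : ℕ → EuclideanSpace ℝ (Fin d)} {r : ℝ} (hr : 0 ≤ r)
    (h : ∀ i < n, Metric.infDist (x i) (f '' Set.Icc 0 1) ≤ ‖e i‖ + r) :
    empDistortion V n x f ≤ C * ((n : ℝ)⁻¹ * ∑ i ∈ Finset.range n, V ‖e i‖) + C * V r := by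
  have hterm : ∀ i ∈ Finset.range n,
      V (Metric.infDist (x i) (f '' Set.Icc 0 1)) ≤ C * V ‖e i‖ + C * V r := fun i hi =>
    calc V (Metric.infDist (x i) (f '' Set.Icc 0 1)) ≤ V (‖e i‖ + r) :=
          hV Metric.infDist_nonneg (add_nonneg (norm_nonneg _) hr) (h i (Finset.mem_range.mp hi))
      _ ≤ C * V ‖e i‖ + C * V r := by
          rw [← mul_add]; exact hVsub _ (norm_nonneg _) _ hr
  calc empDistortion V n x f
      ≤ (n : ℝ)⁻¹ * ∑ i ∈ Finset.range n, (C * V ‖e i‖ + C * V r) :=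
        mul_le_mul_of_nonneg_left (Finset.sum_le_sum hterm) (by positivity)
    _ = C * ((n : ℝ)⁻¹ * ∑ i ∈ Finset.range n, V ‖e i‖) + C * V r := by
        rw [Finset.sum_add_distrib, ← Finset.mul_sum, Finset.sum_const, Finset.card_range,
          nsmul_eq_mul]
        field_simp

theorem tendsto_measure_le_of_le_mul_add {Ω : Type*} [MeasurableSpace Ω] (μ : Measure Ω)
    {Y Z : ℕ → Ω → ℝ} {b : ℕ → ℝ} {C : ℝ} (hC : 0 < C) (hb : Tendsto b atTop (𝓝 0))
    (hYZ : ∀ᶠ n in atTop, ∀ ω, Y n ω ≤ C * Z n ω + b n)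
    (hZ : ∀ δ > (0:ℝ), Tendsto (fun n => μ {ω | δ ≤ Z n ω}) atTop (𝓝 0)) :
    ∀ δ > (0:ℝ), Tendsto (fun n => μ {ω | δ ≤ Y n ω}) atTop (𝓝 0) := by
  intro δ hδ
  refine tendsto_of_tendsto_of_tendsto_of_le_of_le' tendsto_const_nhds
    (hZ (δ / (2 * C)) (by positivity)) (Eventually.of_forall fun n => zero_le) ?_
  filter_upwards [hYZ, hb.eventually (eventually_le_nhds (half_pos hδ))] with n hn hbn
  refine measure_mono fun ω (hω : δ ≤ Y n ω) => ?_
  show δ / (2 * C) ≤ Z n ω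
  rw [div_le_iff₀ (by positivity)]
  linarith [hn ω]

theorem statement_16_general {d : ℕ}
    (V : ℝ → ℝ)
    (hVmono : StrictMonoOn V (Set.Ici 0))
    (hVcont0 : ContinuousWithinAt V (Set.Ici 0) 0) (hV0 : V 0 = 0)
    (C : ℝ) (hC : 0 < C)
    (hVsub : ∀ x ∈ Set.Ici (0:ℝ), ∀ y ∈ Set.Ici (0:ℝ), V (x + y) ≤ C * (V x + V y))
    (g : ℝ → EuclideanSpace ℝ (Fin d)) (hgc : ContinuousOn g (Set.Icc 0 1))
    (Λ : ℝ) (hgΛ : eVariationOn g (Set.Icc 0 1) ≤ ENNReal.ofReal Λ)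
    {Ω : Type*} [MeasurableSpace Ω] (P : Measure Ω)
    (U : ℕ → ℕ → Ω → ℝ) (eps : ℕ → ℕ → Ω → EuclideanSpace ℝ (Fin d))
    (hUrange : ∀ n i ω, U n i ω ∈ Set.Icc (0:ℝ) 1)
    (X : ℕ → ℕ → Ω → EuclideanSpace ℝ (Fin d))
    (hX : ∀ n i ω, X n i ω = g (U n i ω) + eps n i ω)
    (hnoise : ∀ δ > (0:ℝ), Tendsto
      (fun n : ℕ => P {ω | δ ≤ (n : ℝ)⁻¹ * ∑ i ∈ Finset.range n, V ‖eps n i ω‖}) atTop (𝓝 0))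
    (fhat : ℕ → ℝ → Ω → ℝ → EuclideanSpace ℝ (Fin d))
    (hfhatOpt : ∀ n L ω, 0 ≤ L → ∀ f : ℝ → EuclideanSpace ℝ (Fin d),
      ContinuousOn f (Set.Icc 0 1) → eVariationOn f (Set.Icc 0 1) ≤ ENNReal.ofReal L →
      empDistortion V n (fun i => X n i ω) (fhat n L ω) ≤
        empDistortion V n (fun i => X n i ω) f)
    (a : ℕ → ℝ) (ha : ∀ n, 0 < a n) (haLim : Tendsto a atTop (𝓝 0))
    :
    ∀ δ > (0:ℝ), Tendsto (fun n => P {ω | δ ≤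
      empDistortion V n (fun i => X n i ω)
        (fhat n (a n * ⌊(eVariationOn g (Set.Icc 0 1)).toReal / a n⌋₊) ω)})
      atTop (𝓝 0) := by
  set ℓ := (eVariationOn g (Set.Icc 0 1)).toReal
  have hfin : eVariationOn g (Set.Icc 0 1) ≠ ⊤ := ne_top_of_le_ne_top ENNReal.ofReal_ne_top hgΛ
  have hbound : ∀ n ≠ 0, ∀ ω, empDistortion V n (fun i => X n i ω) (fhat n (a n * ⌊ℓ / a n⌋₊) ω)
      ≤ C * ((n : ℝ)⁻¹ * ∑ i ∈ Finset.range n, V ‖eps n i ω‖) + C * V (a n) := by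
    intro n hn ω
    have hL₀ : 0 ≤ a n * ⌊ℓ / a n⌋₊ := by have := ha n; positivity
    obtain ⟨f, hfc, hfvar, hfg⟩ := exists_eVariationOn_le_dist_le hgc hfin
      (Set.left_mem_Icc.mpr zero_le_one) hL₀ (mul_natFloor_div_le (ha n) ENNReal.toReal_nonneg)
    refine (hfhatOpt n _ ω hL₀ f hfc hfvar).trans <|
      empDistortion_le_of_infDist_le hVmono.monotoneOn hVsub hn (ha n).le fun i _ => ?_
    rw [hX]
    grw [infDist_add_image_le (hUrange n i ω), hfg _ (hUrange n i ω),
      sub_mul_natFloor_div_lt (ha n) ℓ]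
  have hVa : Tendsto (fun n => V (a n)) atTop (𝓝 0) :=
    hV0 ▸ hVcont0.tendsto.comp (tendsto_nhdsWithin_of_tendsto_nhds_of_eventually_within _ haLim
      (Eventually.of_forall fun n => (ha n).le))
  exact tendsto_measure_le_of_le_mul_add P hC (by simpa using hVa.const_mul C)
    (eventually_ne_atTop 0 |>.mono hbound) hnoise

/-- In the small-noise model, with
`f*_n = f̂_{n, a_n ⌊𝓛(g)/a_n⌋}`, the empirical distortion `Δ_n(f*_n)` converges
in probability to `0` as `n → ∞`. -/
theorem statement_16 {d : ℕ}
    (V : ℝ → ℝ)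
    (hVnonneg : ∀ x ∈ Set.Ici (0:ℝ), 0 ≤ V x)
    (hVlsc : LowerSemicontinuousOn V (Set.Ici 0))
    (hVmono : StrictMonoOn V (Set.Ici 0))
    (hVcont0 : ContinuousWithinAt V (Set.Ici 0) 0) (hV0 : V 0 = 0)
    (C : ℝ) (hC : 0 < C)
    (hVsub : ∀ x ∈ Set.Ici (0:ℝ), ∀ y ∈ Set.Ici (0:ℝ), V (x + y) ≤ C * (V x + V y))
    (c : ℝ) (hc : 0 < c)
    (g : ℝ → EuclideanSpace ℝ (Fin d)) (hgc : ContinuousOn g (Set.Icc 0 1))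
    (Λ : ℝ) (hgΛ : eVariationOn g (Set.Icc 0 1) ≤ ENNReal.ofReal Λ)
    (g' : ℝ → EuclideanSpace ℝ (Fin d))
    (hg' : ∀ᵐ t ∂(volume.restrict (Set.Icc (0:ℝ) 1)),
      HasDerivAt g (g' t) t ∧ ‖g' t‖ = (eVariationOn g (Set.Icc 0 1)).toReal)
    (hgH : μH[1] (g '' Set.Icc 0 1) = eVariationOn g (Set.Icc 0 1))
    {Ω : Type*} [MeasurableSpace Ω] (P : Measure Ω) [IsProbabilityMeasure P]
    (U : ℕ → ℕ → Ω → ℝ) (eps : ℕ → ℕ → Ω → EuclideanSpace ℝ (Fin d))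
    (hUmeas : ∀ n, ∀ i < n, Measurable (U n i))
    (hUrange : ∀ n i ω, U n i ω ∈ Set.Icc (0:ℝ) 1)
    (hUlaw : ∀ n, ∀ i < n, P.map (U n i) ∈ Mc c)
    (hUindep : ∀ n, ProbabilityTheory.iIndepFun
      (fun i : Fin n => U n (i : ℕ)) P)
    (X : ℕ → ℕ → Ω → EuclideanSpace ℝ (Fin d))
    (hX : ∀ n i ω, X n i ω = g (U n i ω) + eps n i ω)
    (hnoise : ∀ δ > (0:ℝ), Tendsto
      (fun n : ℕ => P {ω | δ ≤ (n : ℝ)⁻¹ * ∑ i ∈ Finset.range n, V ‖eps n i ω‖}) atTop (𝓝 0))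
    (fhat : ℕ → ℝ → Ω → ℝ → EuclideanSpace ℝ (Fin d))
    (hfhatLip : ∀ n L ω, 0 ≤ L →
      LipschitzOnWith (Real.toNNReal L) (fhat n L ω) (Set.Icc 0 1))
    (hfhatOpt : ∀ n L ω, 0 ≤ L → ∀ f : ℝ → EuclideanSpace ℝ (Fin d),
      ContinuousOn f (Set.Icc 0 1) → eVariationOn f (Set.Icc 0 1) ≤ ENNReal.ofReal L →
      empDistortion V n (fun i => X n i ω) (fhat n L ω) ≤
        empDistortion V n (fun i => X n i ω) f)
    (a : ℕ → ℝ) (ha : ∀ n, 0 < a n) (haLim : Tendsto a atTop (𝓝 0))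
    :
    ∀ δ > (0:ℝ), Tendsto (fun n => P {ω | δ ≤
      empDistortion V n (fun i => X n i ω)
        (fhat n (a n * ⌊(eVariationOn g (Set.Icc 0 1)).toReal / a n⌋₊) ω)})
      atTop (𝓝 0) :=
  statement_16_general V hVmono hVcont0 hV0 C hC hVsub g hgc Λ hgΛ P U eps hUrange X hX hnoise fhat
    hfhatOpt a ha haLim
end

section
/- Let (f_n)_{n≥1} be a sequence of curves converging uniformly on [0,1] to a curve φ, and let (ν_n)_{n≥1} be probability measures on [0,1] × ℝ^d converging weakly to a probability measure ν. Assume that for every n, ν_n is supported on the set {(t,z) ∈ [0,1] × ℝ^d : |z − f_n(t)| = min_{s∈[0,1]} |z − f_n(s)|}, i.e. ν_n gives this set full measure. Then ν({(t,z) : |z − φ(t)| = min_{s∈[0,1]} |z − φ(s)|}) = 1. -/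
open MeasureTheory Filter
open scoped Topology BoundedContinuousFunction

/-!
The defect `D γ (t, z) = |z - γ t| - dist (z, range γ)` is nonnegative, continuous, and moves by
at most `2ε` when `γ` moves by at most `ε` uniformly. Hence `D φ ≤ 2ε` holds `ν n`-a.e. for
large `n`, and testing the weak convergence against the bounded continuous function
`min (D φ) 1` forces `∫ min (D φ) 1 dν = 0`, i.e. `D φ = 0` holds `ν`-a.e.
-/

section ProjectionDefect

variable {T E : Type*} [PseudoMetricSpace E]

open Metric Set

noncomputable def projectionDefect (γ : T → E) (p : T × E) : ℝ :=
  dist p.2 (γ p.1) - infDist p.2 (range γ)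

lemma projectionDefect_nonneg (γ : T → E) : 0 ≤ projectionDefect γ :=
  fun p => sub_nonneg.2 (infDist_le_dist_of_mem (mem_range_self p.1))

lemma projectionDefect_eq_zero_iff {γ : T → E} {p : T × E} :
    projectionDefect γ p = 0 ↔ dist p.2 (γ p.1) = infDist p.2 (range γ) :=
  sub_eq_zero

lemma Continuous.projectionDefect [TopologicalSpace T] {γ : T → E} (hγ : Continuous γ) :
    Continuous (projectionDefect γ) :=
  (continuous_snd.dist (hγ.comp continuous_fst)).sub
    ((continuous_infDist_pt _).comp continuous_snd)

lemma projectionDefect_le_add {γ η : T → E} {ε : ℝ} (h : ∀ t, dist (γ t) (η t) ≤ ε)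
    (p : T × E) : projectionDefect γ p ≤ projectionDefect η p + 2 * ε := by
  obtain ⟨t, z⟩ := p
  have hdist : dist z (γ t) ≤ dist z (η t) + ε :=
    (dist_triangle_right z (γ t) (η t)).trans (by linarith [h t])
  have hinf : infDist z (range η) - ε ≤ infDist z (range γ) := by
    refine (le_infDist (range_nonempty_iff_nonempty.2 ⟨t⟩)).2 ?_
    rintro _ ⟨s, rfl⟩
    have := (infDist_le_dist_of_mem (mem_range_self (f := η) s) (x := z)).trans
      (dist_triangle z (γ s) (η s))
    linarith [h s]
  simp only [projectionDefect]
  linarith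

lemma ae_projectionDefect_eq_zero_iff [TopologicalSpace T] [MeasurableSpace T]
    [MeasurableSpace E] [OpensMeasurableSpace (T × E)] {μ : Measure (T × E)}
    [IsProbabilityMeasure μ] {γ : T → E} (hγ : Continuous γ) :
    (∀ᵐ p ∂μ, projectionDefect γ p = 0) ↔
      μ {p | dist p.2 (γ p.1) = infDist p.2 (range γ)} = 1 := by
  rw [ae_iff_measure_eq (isClosed_eq hγ.projectionDefect continuous_const).nullMeasurableSet,
    measure_univ]
  simp_rw [projectionDefect_eq_zero_iff]

end ProjectionDefect

lemma ae_eq_zero_of_tendsto_integral_of_eventually_ae_le {ι X : Type*} {l : Filter ι} [l.NeBot]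
    [TopologicalSpace X] [MeasurableSpace X] [OpensMeasurableSpace X] {μ : ι → Measure X}
    {μlim : Measure X} [IsFiniteMeasure μlim]
    (hweak : ∀ h : X →ᵇ ℝ, Tendsto (fun i => ∫ x, h x ∂μ i) l (𝓝 (∫ x, h x ∂μlim)))
    {g : X → ℝ} (hg : Continuous g) (hg0 : 0 ≤ g)
    (hsmall : ∀ ε > 0, ∀ᶠ i in l, ∀ᵐ x ∂μ i, g x ≤ ε) :
    ∀ᵐ x ∂μlim, g x = 0 := by
  set h : X →ᵇ ℝ := .mkOfBound ⟨fun x => min (g x) 1, hg.min continuous_const⟩ 1 fun x y =>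
    Real.dist_le_of_mem_Icc_01 ⟨le_min (hg0 x) zero_le_one, min_le_right _ _⟩
      ⟨le_min (hg0 y) zero_le_one, min_le_right _ _⟩
  have hh0 : 0 ≤ ⇑h := fun x => le_min (hg0 x) zero_le_one
  have hlim_le (ε : ℝ) (hε : 0 < ε) : ∫ x, h x ∂μlim ≤ μlim.real Set.univ * ε := by
    have hsub : ∫ x, (h - .const X ε) x ∂μlim = ∫ x, h x ∂μlim - μlim.real Set.univ * ε := by
      simp only [BoundedContinuousFunction.coe_sub, Pi.sub_apply,
        BoundedContinuousFunction.const_apply']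
      rw [integral_sub (h.integrable μlim) (integrable_const ε), integral_const, smul_eq_mul]
    refine sub_nonpos.1 (hsub ▸ le_of_tendsto (hweak _) ?_)
    filter_upwards [hsmall ε hε] with i hi
    refine integral_nonpos_of_ae ?_
    filter_upwards [hi] with x hx
    exact sub_nonpos.2 ((min_le_left _ _).trans hx)
  have hlim : ∫ x, h x ∂μlim = 0 := by
    refine le_antisymm ?_ (integral_nonneg hh0)
    have hC : Tendsto (fun ε => μlim.real Set.univ * ε) (𝓝[>] 0) (𝓝 0) := by
      simpa using tendsto_nhdsWithin_of_tendsto_nhds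
        ((continuous_const_mul (μlim.real Set.univ)).tendsto (0 : ℝ))
    exact ge_of_tendsto hC (eventually_nhdsWithin_of_forall hlim_le)
  filter_upwards [(integral_eq_zero_iff_of_nonneg hh0 (h.integrable μlim)).1 hlim] with x hx
  by_contra hne
  exact (lt_min ((hg0 x).lt_of_ne' hne) one_pos).ne' hx

/-- If curves `f n` converge uniformly on `[0,1]` to a curve `φ`,
and probability measures `ν n` on `[0,1] × ℝ^d` converge weakly to `ν`, with each
`ν n` giving full measure to the set
`{(t,z) | |z - f n t| = min_{s ∈ [0,1]} |z - f n s|}`, then `ν` gives full measure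
to `{(t,z) | |z - φ t| = min_{s ∈ [0,1]} |z - φ s|}`. -/
theorem statement_18 {d : ℕ}
    (f : ℕ → ℝ → EuclideanSpace ℝ (Fin d)) (φ : ℝ → EuclideanSpace ℝ (Fin d))
    (hf : ∀ n, ContinuousOn (f n) (Set.Icc 0 1)) (hφ : ContinuousOn φ (Set.Icc 0 1))
    (hunif : TendstoUniformlyOn f φ atTop (Set.Icc 0 1))
    (ν : ℕ → Measure (unitInterval × EuclideanSpace ℝ (Fin d)))
    (νlim : Measure (unitInterval × EuclideanSpace ℝ (Fin d)))
    [∀ n, IsProbabilityMeasure (ν n)] [IsProbabilityMeasure νlim]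
    (hweak : ∀ h : (unitInterval × EuclideanSpace ℝ (Fin d)) →ᵇ ℝ,
      Tendsto (fun n => ∫ p, h p ∂(ν n)) atTop (𝓝 (∫ p, h p ∂νlim)))
    (hsupp : ∀ n, ν n {p : unitInterval × EuclideanSpace ℝ (Fin d) |
      dist p.2 (f n (p.1 : ℝ)) = Metric.infDist p.2 (f n '' Set.Icc 0 1)} = 1) :
    νlim {p : unitInterval × EuclideanSpace ℝ (Fin d) |
      dist p.2 (φ (p.1 : ℝ)) = Metric.infDist p.2 (φ '' Set.Icc 0 1)} = 1 := by
  have hfc (n : ℕ) : Continuous fun t : unitInterval => f n t := (hf n).domRestrict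
  have hφc : Continuous fun t : unitInterval => φ t := hφ.domRestrict
  simp only [Set.image_eq_range] at hsupp ⊢
  refine (ae_projectionDefect_eq_zero_iff hφc).1 <|
    ae_eq_zero_of_tendsto_integral_of_eventually_ae_le hweak hφc.projectionDefect
      (projectionDefect_nonneg _) fun ε hε => ?_
  filter_upwards [Metric.tendstoUniformlyOn_iff.1 hunif (ε / 2) (half_pos hε)] with n hn
  filter_upwards [(ae_projectionDefect_eq_zero_iff (hfc n)).2 (hsupp n)] with p hp
  calc projectionDefect (fun t : unitInterval => φ t) p
      ≤ projectionDefect (fun t : unitInterval => f n t) p + 2 * (ε / 2) :=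
        projectionDefect_le_add (fun t : unitInterval => (hn t t.2).le) p
    _ = ε := by rw [hp]; ring
end

section
/- Let g, φ:[0,1]→ℝ^d be curves with 𝓛(g) < ∞ and ℋ¹(Im g) = 𝓛(g). If Im g ⊆ Im φ and 𝓛(φ) ≤ 𝓛(g), then Im φ = Im g and 𝓛(φ) = 𝓛(g). -/
/-!
A curve of finite length `L` is the image of its arc-length reparametrization, a 1-Lipschitz
map on a set of diameter at most `L`, so `ℋ¹(Im φ) ≤ 𝓛(φ)`. Hence `ℋ¹(Im φ) ≤ 𝓛(g) = ℋ¹(Im g)`,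
and since `Im g ⊆ Im φ` has finite measure, `Im φ \ Im g` is `ℋ¹`-null. If some point of `Im φ`
were at distance `δ > 0` from the compact set `Im g`, connectedness of `Im φ` would make the
1-Lipschitz function `dist(·, Im g)` map `Im φ \ Im g` onto a set containing `(0, δ]`, which has
positive measure. So `Im φ = Im g`, and then `𝓛(g) = ℋ¹(Im φ) ≤ 𝓛(φ)`.
-/

open MeasureTheory Set
open scoped ENNReal NNReal

section UnitSpeed

variable {E : Type*} {f : ℝ → E} {s : Set ℝ}

theorem HasUnitSpeedOn.eVariationOn_inter_Icc [PseudoEMetricSpace E] (hf : HasUnitSpeedOn f s)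
    {x y : ℝ} (hx : x ∈ s) (hy : y ∈ s) (hxy : x ≤ y) :
    eVariationOn f (s ∩ Icc x y) = edist x y := by
  rw [hf hx hy, edist_dist, Real.dist_eq, abs_sub_comm, abs_of_nonneg (sub_nonneg.2 hxy),
    NNReal.coe_one, one_mul]

theorem HasUnitSpeedOn.lipschitzOnWith [PseudoEMetricSpace E] (hf : HasUnitSpeedOn f s) :
    LipschitzOnWith 1 f s := by
  intro x hx y hy
  wlog hxy : x ≤ y generalizing x y
  · rw [edist_comm, edist_comm x]
    exact this hy hx (le_of_not_ge hxy)
  calc edist (f x) (f y) ≤ eVariationOn f (s ∩ Icc x y) :=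
        eVariationOn.edist_le f ⟨hx, le_rfl, hxy⟩ ⟨hy, hxy, le_rfl⟩
    _ = 1 * edist x y := by rw [hf.eVariationOn_inter_Icc hx hy hxy, one_mul]

theorem HasUnitSpeedOn.ediam_le_eVariationOn [PseudoEMetricSpace E] (hf : HasUnitSpeedOn f s) :
    Metric.ediam s ≤ eVariationOn f s := by
  refine Metric.ediam_le fun x hx y hy => ?_
  wlog hxy : x ≤ y generalizing x y
  · rw [edist_comm]
    exact this y hy x hx (le_of_not_ge hxy)
  rw [← hf.eVariationOn_inter_Icc hx hy hxy]
  exact eVariationOn.mono f inter_subset_left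

theorem HasUnitSpeedOn.hausdorffMeasure_image_le [EMetricSpace E] [MeasurableSpace E]
    [BorelSpace E] (hf : HasUnitSpeedOn f s) :
    μH[1] (f '' s) ≤ eVariationOn f s :=
  calc μH[1] (f '' s) ≤ (1 : ℝ≥0) ^ (1 : ℝ) * μH[1] s :=
        hf.lipschitzOnWith.hausdorffMeasure_image_le zero_le_one
    _ = volume s := by rw [hausdorffMeasure_real]; simp
    _ ≤ Metric.ediam s := Real.volume_le_diam s
    _ ≤ eVariationOn f s := hf.ediam_le_eVariationOn

end UnitSpeed

theorem hausdorffMeasure_image_le_eVariationOn {α E : Type*} [LinearOrder α] [EMetricSpace E]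
    [MeasurableSpace E] [BorelSpace E] (f : α → E) (s : Set α) :
    μH[1] (f '' s) ≤ eVariationOn f s := by
  by_cases hfin : eVariationOn f s = ⊤
  · simp [hfin]
  rcases s.eq_empty_or_nonempty with rfl | ⟨a, ha⟩
  · simp
  have hf : LocallyBoundedVariationOn f s :=
    BoundedVariationOn.locallyBoundedVariationOn hfin
  set v := variationOnFromTo f s a
  set γ := naturalParameterization f s a
  have hγv : EqOn (γ ∘ v) f s := fun b hb =>
    edist_eq_zero.1 (edist_naturalParameterization_eq_zero hf ha hb)
  calc μH[1] (f '' s) = μH[1] (γ '' (v '' s)) := by rw [image_image, ← hγv.image_eq]; rfl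
    _ ≤ eVariationOn γ (v '' s) :=
        (has_unit_speed_naturalParameterization f hf ha).hausdorffMeasure_image_le
    _ = eVariationOn f s := by
        rw [← eVariationOn.comp_eq_of_monotoneOn γ v (variationOnFromTo.monotoneOn hf ha),
          eVariationOn.congr hγv]

theorem IsPreconnected.subset_of_hausdorffMeasure_diff_eq_zero {X : Type*} [MetricSpace X]
    [MeasurableSpace X] [BorelSpace X] {A K : Set X} (hA : IsPreconnected A) (hK : IsClosed K)
    (hAK : (A ∩ K).Nonempty) (hnull : μH[1] (A \ K) = 0) : A ⊆ K := by
  intro x hx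
  by_contra hxK
  set δ := Metric.infDist x K
  have hδ : 0 < δ := (hK.notMem_iff_infDist_pos (hAK.mono inter_subset_right)).1 hxK
  have hlip := Metric.lipschitz_infDist_pt K
  obtain ⟨k, hkA, hkK⟩ := hAK
  have hIcc : Icc 0 δ ⊆ (Metric.infDist · K) '' A :=
    (hA.image _ hlip.continuous.continuousOn).Icc_subset
      ⟨k, hkA, Metric.infDist_zero_of_mem hkK⟩ ⟨x, hx, rfl⟩
  have hIoc : Ioc 0 δ ⊆ (Metric.infDist · K) '' (A \ K) := by
    rintro t ⟨ht, htδ⟩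
    obtain ⟨y, hy, rfl⟩ := hIcc ⟨ht.le, htδ⟩
    exact ⟨y, ⟨hy, fun hyK => ht.ne' (Metric.infDist_zero_of_mem hyK)⟩, rfl⟩
  have : μH[1] (Ioc 0 δ) ≤ 0 :=
    calc μH[1] (Ioc 0 δ) ≤ μH[1] ((Metric.infDist · K) '' (A \ K)) := measure_mono hIoc
      _ ≤ (1 : ℝ≥0) ^ (1 : ℝ) * μH[1] (A \ K) :=
          hlip.lipschitzOnWith.hausdorffMeasure_image_le zero_le_one
      _ = 0 := by rw [hnull, mul_zero]
  rw [hausdorffMeasure_real, Real.volume_Ioc, sub_zero, nonpos_iff_eq_zero,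
    ENNReal.ofReal_eq_zero] at this
  exact hδ.not_ge this

/-- Let `g, φ : [0,1] → ℝ^d` be curves with `𝓛(g) < ∞` and
`ℋ¹(Im g) = 𝓛(g)`. If `Im g ⊆ Im φ` and `𝓛(φ) ≤ 𝓛(g)`, then `Im φ = Im g` and
`𝓛(φ) = 𝓛(g)`. -/
theorem statement_19 {d : ℕ}
    (g φ : ℝ → EuclideanSpace ℝ (Fin d))
    (hg : ContinuousOn g (Set.Icc 0 1)) (hφ : ContinuousOn φ (Set.Icc 0 1))
    (hrect : eVariationOn g (Set.Icc 0 1) ≠ ⊤)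
    (hlen : μH[1] (g '' Set.Icc 0 1) = eVariationOn g (Set.Icc 0 1))
    (hsub : g '' Set.Icc 0 1 ⊆ φ '' Set.Icc 0 1)
    (hle : eVariationOn φ (Set.Icc 0 1) ≤ eVariationOn g (Set.Icc 0 1)) :
    φ '' Set.Icc 0 1 = g '' Set.Icc 0 1 ∧
      eVariationOn φ (Set.Icc 0 1) = eVariationOn g (Set.Icc 0 1) := by
  have hK : IsClosed (g '' Icc 0 1) := (isCompact_Icc.image_of_continuousOn hg).isClosed
  have hnull : μH[1] (φ '' Icc 0 1 \ g '' Icc 0 1) = 0 := by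
    rw [measure_sdiff hsub hK.measurableSet.nullMeasurableSet (hlen ▸ hrect), hlen]
    exact tsub_eq_zero_of_le ((hausdorffMeasure_image_le_eVariationOn φ _).trans hle)
  have hmeet : (φ '' Icc 0 1 ∩ g '' Icc 0 1).Nonempty := by
    rw [inter_eq_right.2 hsub]
    exact (nonempty_Icc.2 zero_le_one).image g
  have himg : φ '' Icc 0 1 = g '' Icc 0 1 :=
    ((isPreconnected_Icc.image φ hφ).subset_of_hausdorffMeasure_diff_eq_zero hK hmeet
      hnull).antisymm hsub
  refine ⟨himg, hle.antisymm ?_⟩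
  calc eVariationOn g (Icc 0 1) = μH[1] (φ '' Icc 0 1) := by rw [himg, hlen]
    _ ≤ eVariationOn φ (Icc 0 1) := hausdorffMeasure_image_le_eVariationOn φ _
end
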